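/- arXiv:1604.00740 — 7 statements merged into one kernel-verified Lean document; each statement's English description precedes it below -/
import Mathlib

section
/- Let G be a connected graph, v an articulation point of G, V1 the vertex set of one connected component of G − v, and V2 = V − V1 − {v}. Suppose at some stage of the forcing process v and all vertices of N(v) ∩ V1 are colored and every vertex of V2 is uncolored. Then the forcing process can color all of G only if the induced subgraph G[V2] is a path. -/
open SimpleGraph

/-- A vertex is (eventually) colored in the forcing process starting from `S`:
either it is in `S`, or some colored vertex `u` adjacent to it has all of its
other neighbors colored, so `u` forces it. -/
inductive SimpleGraph.Forced {V : Type*} (G : SimpleGraph V) (S : Set V) : V → Prop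
  | init {v : V} (hv : v ∈ S) : G.Forced S v
  | force {u w : V} (hu : G.Forced S u) (hadj : G.Adj u w)
      (hothers : ∀ x, G.Adj u x → x ≠ w → G.Forced S x) : G.Forced S w

/-- `S` is a (zero) forcing set of `G`. -/
def SimpleGraph.IsForcingSet {V : Type*} (G : SimpleGraph V) (S : Set V) : Prop :=
  ∀ v, G.Forced S v

/-- `S` is a connected forcing set of `G`. -/
def SimpleGraph.IsConnForcingSet {V : Type*} (G : SimpleGraph V) (S : Set V) : Prop :=
  G.IsForcingSet S ∧ (G.induce S).Connected

/-- The (zero) forcing number `F(G)`. -/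
noncomputable def SimpleGraph.zfNum {V : Type*} (G : SimpleGraph V) : ℕ :=
  sInf {n | ∃ S : Set V, S.ncard = n ∧ G.IsForcingSet S}

/-- The connected forcing number `F_c(G)`. -/
noncomputable def SimpleGraph.czfNum {V : Type*} (G : SimpleGraph V) : ℕ :=
  sInf {n | ∃ S : Set V, S.ncard = n ∧ G.IsConnForcingSet S}

/-- `G` is a path graph. -/
def SimpleGraph.IsPathGraph {V : Type*} (G : SimpleGraph V) : Prop :=
  ∃ n : ℕ, Nonempty (G ≃g SimpleGraph.pathGraph n)

/-- Deletion of a vertex. -/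
def SimpleGraph.delVert {V : Type*} (G : SimpleGraph V) (v : V) :
    SimpleGraph {w : V // w ≠ v} :=
  G.induce {w : V | w ≠ v}

/-- `v` is a leaf (degree-1 vertex) of `G`. -/
def SimpleGraph.IsLeaf {V : Type*} (G : SimpleGraph V) (v : V) : Prop :=
  (G.neighborSet v).ncard = 1

def fstep {V : Type*} (G : SimpleGraph V) (A : Set V) : Set V :=
  A ∪ {w | ∃ u ∈ A, G.Adj u w ∧ ∀ x, G.Adj u x → x ≠ w → x ∈ A}

def layer {V : Type*} (G : SimpleGraph V) (S : Set V) (n : ℕ) : Set V := (fstep G)^[n] S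

lemma layer_succ {V : Type*} (G : SimpleGraph V) (S : Set V) (n : ℕ) :
    layer G S (n+1) = fstep G (layer G S n) := Function.iterate_succ_apply' _ _ _

lemma layer_mono {V : Type*} (G : SimpleGraph V) (S : Set V) : Monotone (layer G S) :=
  monotone_nat_of_le_succ fun n => by rw [layer_succ]; exact Set.subset_union_left

lemma forced_layer {V : Type*} [Fintype V] (G : SimpleGraph V) (S : Set V) {w : V}
    (h : G.Forced S w) : ∃ n, w ∈ layer G S n := by
  classical
  induction h with
  | init hv => exact ⟨0, hv⟩
  | @force u w hu hadj hothers ihu iho =>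
    obtain ⟨nu, hnu⟩ := ihu
    choose nf hnf using iho
    set N := max nu ((Finset.univ : Finset V).sup
      fun x => if h : G.Adj u x ∧ x ≠ w then nf x h.1 h.2 else 0) with hN
    refine ⟨N + 1, ?_⟩
    rw [layer_succ]
    refine Or.inr ⟨u, layer_mono G S (le_max_left _ _) hnu, hadj, fun x hx hxw => ?_⟩
    have hle : nf x hx hxw ≤ N := by
      refine le_trans ?_ (le_max_right _ _)
      have := Finset.le_sup (f := fun x => if h : G.Adj u x ∧ x ≠ w then nf x h.1 h.2 else 0)
        (Finset.mem_univ x)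
      simpa [hx, hxw] using this
    exact layer_mono G S hle (hnf x hx hxw)

theorem forcing_through_articulation_point {V : Type*} [Fintype V]
    (G : SimpleGraph V) (hG : G.Connected) (v : V)
    (hart : ¬ (G.delVert v).Connected)
    (c : (G.delVert v).ConnectedComponent) (V1 V2 : Set V)
    (hV1 : V1 = Subtype.val '' c.supp)
    (hV2 : V2 = {w : V | w ≠ v ∧ w ∉ V1})
    (S : Set V) (hvS : v ∈ S) (hN : G.neighborSet v ∩ V1 ⊆ S)
    (hV2S : ∀ w ∈ V2, w ∉ S)
    (hforce : G.IsForcingSet S) :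
    (G.induce V2).IsPathGraph := by
  classical
  have hV2mem : ∀ w ∈ V2, w ≠ v ∧ w ∉ V1 := fun w hw => by rwa [hV2] at hw
  have hmemV2 : ∀ w : V, w ≠ v → w ∉ V1 → w ∈ V2 := fun w h1 h2 => by
    rw [hV2]; exact ⟨h1, h2⟩
  -- no edges between V1 and V2
  have hsep : ∀ x ∈ V1, ∀ y ∈ V2, ¬ G.Adj x y := by
    rintro x hx y hy hadj
    rw [hV1] at hx
    obtain ⟨a, ha, rfl⟩ := hx
    have hyv : y ≠ v := (hV2mem y hy).1
    have hady : (G.delVert v).Adj a ⟨y, hyv⟩ := hadj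
    have hy1 : y ∈ V1 := by
      rw [hV1]
      refine ⟨⟨y, hyv⟩, ?_, rfl⟩
      rw [ConnectedComponent.mem_supp_iff] at ha ⊢
      rw [← ha]
      exact ConnectedComponent.sound hady.symm.reachable
    exact (hV2mem y hy).2 hy1
  -- the time function τ
  have hex : ∀ w : V, ∃ n, w ∈ layer G S n := fun w => forced_layer G S (hforce w)
  obtain ⟨τ, hτmem, hτle⟩ : ∃ τ : V → ℕ, (∀ w, w ∈ layer G S (τ w)) ∧
      (∀ w n, w ∈ layer G S n → τ w ≤ n) :=
    ⟨fun w => Nat.find (hex w), fun w => Nat.find_spec (hex w), fun w n h => Nat.find_le h⟩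
  have hτpos : ∀ w ∈ V2, 1 ≤ τ w := by
    intro w hw
    by_contra h
    have h0 : τ w = 0 := by omega
    have : w ∈ layer G S 0 := h0 ▸ hτmem w
    exact hV2S w hw this
  -- the forcer function f
  have hforcer : ∀ w : V, ∃ u : V, w ∈ V2 → (u ∈ layer G S (τ w - 1) ∧ G.Adj u w ∧
      ∀ x, G.Adj u x → x ≠ w → x ∈ layer G S (τ w - 1)) := by
    intro w
    by_cases hw : w ∈ V2
    · have h1 : 1 ≤ τ w := hτpos w hw
      have h2 : w ∉ layer G S (τ w - 1) := by
        intro hmem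
        have := hτle w _ hmem
        omega
      have h3 : w ∈ layer G S (τ w) := hτmem w
      rw [show τ w = (τ w - 1) + 1 by omega, layer_succ] at h3
      rcases h3 with h | ⟨u, hu, hadj, hoth⟩
      · exact absurd h h2
      · exact ⟨u, fun _ => ⟨hu, hadj, hoth⟩⟩
    · exact ⟨v, fun h' => absurd h' hw⟩
  choose f hf using hforcer
  have hfτ : ∀ w ∈ V2, τ (f w) < τ w := by
    intro w hw
    have h1 := hτle _ _ (hf w hw).1
    have := hτpos w hw
    omega
  -- f is exclusive
  have hexcl : ∀ w ∈ V2, ∀ w' ∈ V2, f w = f w' → w = w' := by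
    intro w hw w' hw' hfe
    by_contra hne
    have h1 := hf w hw
    have h2 := hf w' hw'
    have ha1 : w' ∈ layer G S (τ w - 1) :=
      h1.2.2 w' (hfe ▸ h2.2.1) (Ne.symm hne)
    have ha2 : w ∈ layer G S (τ w' - 1) :=
      h2.2.2 w (hfe ▸ h1.2.1) hne
    have := hτle _ _ ha1
    have := hτle _ _ ha2
    have := hτpos w hw
    have := hτpos w' hw'
    omega
  -- f maps into V2 ∪ {v}
  have hfmem : ∀ w ∈ V2, f w = v ∨ f w ∈ V2 := by
    intro w hw
    by_cases h : f w = v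
    · exact Or.inl h
    · refine Or.inr (hmemV2 _ h fun h1 => ?_)
      exact hsep _ h1 w hw (hf w hw).2.1
  -- existence of depth
  have hdex : ∀ w ∈ V2, ∃ m, f^[m] w = v := by
    have key : ∀ n, ∀ w ∈ V2, τ w = n → ∃ m, f^[m] w = v := by
      intro n
      induction n using Nat.strong_induction_on with
      | _ n ih =>
        intro w hw hn
        rcases hfmem w hw with h | h
        · exact ⟨1, by simpa using h⟩
        · obtain ⟨m, hm⟩ := ih (τ (f w)) (hn ▸ hfτ w hw) (f w) h rfl
          exact ⟨m + 1, by rwa [Function.iterate_succ_apply]⟩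
    exact fun w hw => key (τ w) w hw rfl
  obtain ⟨d, hd⟩ : ∃ d : V → ℕ, ∀ w ∈ V2, f^[d w] w = v ∧ 1 ≤ d w ∧
      ∀ j < d w, f^[j] w ≠ v := by
    refine ⟨fun w => if h : w ∈ V2 then Nat.find (hdex w h) else 0, fun w hw => ?_⟩
    simp only [dif_pos hw]
    refine ⟨Nat.find_spec (hdex w hw), ?_, fun j hj => Nat.find_min (hdex w hw) hj⟩
    rcases Nat.eq_zero_or_pos (Nat.find (hdex w hw)) with h | h
    · exfalso
      have := Nat.find_spec (hdex w hw)
      rw [h] at this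
      exact (hV2mem w hw).1 this
    · omega
  have hd1iff : ∀ w ∈ V2, (f w = v ↔ d w = 1) := by
    intro w hw
    obtain ⟨hs, h1, hmin⟩ := hd w hw
    constructor
    · intro h
      by_contra hne
      exact hmin 1 (by omega) (by simpa using h)
    · intro h
      have := hs
      rw [h] at this
      simpa using this
  -- the chain lemma
  have hchain : ∀ w ∈ V2, ∀ i, i < d w →
      f^[i] w ∈ V2 ∧ d (f^[i] w) = d w - i ∧ τ (f^[i] w) ≤ τ w ∧
      (1 ≤ i → τ (f^[i] w) < τ w) := by
    intro w hw i
    induction i with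
    | zero =>
      intro _
      simp only [Function.iterate_zero_apply]
      exact ⟨hw, by omega, le_refl _, by omega⟩
    | succ i ih =>
      intro hi
      obtain ⟨hy2, hyd, hyτ, _⟩ := ih (by omega)
      set y := f^[i] w with hy
      have hdy2 : 2 ≤ d y := by omega
      have hfyv : f y ≠ v := by
        intro h
        rw [hd1iff y hy2] at h
        omega
      have hfy2 : f y ∈ V2 := (hfmem y hy2).resolve_left hfyv
      have hstep : f^[i+1] w = f y := Function.iterate_succ_apply' f i w
      have hiter : f^[d y - 1] (f y) = v := by
        have h := (hd y hy2).1
        rw [show d y = (d y - 1) + 1 from by omega, Function.iterate_succ_apply] at h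
        exact h
      have hdfy : d (f y) = d y - 1 := by
        obtain ⟨hs', h1', hmin'⟩ := hd (f y) hfy2
        by_contra hne
        rcases lt_or_gt_of_ne hne with hlt | hgt
        · have : f^[d (f y) + 1] y = v := by
            rwa [Function.iterate_succ_apply f (d (f y)) y]
          exact (hd y hy2).2.2 _ (by omega) this
        · exact hmin' _ hgt hiter
      have hτfy : τ (f y) < τ y := hfτ y hy2
      refine ⟨hstep ▸ hfy2, ?_, ?_, fun _ => ?_⟩
      · rw [hstep, hdfy]; omega
      · rw [hstep]; omega
      · rw [hstep]; omega
  -- injectivity of d on V2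
  have hdinj : ∀ m, ∀ w ∈ V2, ∀ w' ∈ V2, d w = m → d w' = m → w = w' := by
    intro m
    induction m using Nat.strong_induction_on with
    | _ m ih =>
      intro w hw w' hw' hm hm'
      by_cases h : f w = v
      · have hm1 : m = 1 := by rw [← hm]; exact (hd1iff w hw).1 h
        have h' : f w' = v := (hd1iff w' hw').2 (by omega)
        exact hexcl w hw w' hw' (h.trans h'.symm)
      · have hfw2 : f w ∈ V2 := (hfmem w hw).resolve_left h
        have hm2 : 2 ≤ m := by
          rcases Nat.lt_or_ge m 2 with h2 | h2
          · exfalso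
            have := (hd w hw).2.1
            have hm1 : m = 1 := by omega
            exact h ((hd1iff w hw).2 (by omega))
          · exact h2
        have h' : f w' ≠ v := by
          intro hc
          have := (hd1iff w' hw').1 hc
          omega
        have hfw2' : f w' ∈ V2 := (hfmem w' hw').resolve_left h'
        have e1 : d (f w) = m - 1 := by
          have := (hchain w hw 1 (by omega)).2.1
          simpa [hm] using this
        have e2 : d (f w') = m - 1 := by
          have := (hchain w' hw' 1 (by omega)).2.1
          simpa [hm'] using this
        have : f w = f w' := ih (m - 1) (by omega) _ hfw2 _ hfw2' e1 e2
        exact hexcl w hw w' hw' this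
  -- d is bounded by the cardinality
  set k := Nat.card ↥V2 with hk
  have hdk : ∀ w ∈ V2, d w ≤ k := by
    intro w hw
    have hinj : Function.Injective (fun i : Fin (d w) => (⟨f^[i] w,
        (hchain w hw i i.2).1⟩ : ↥V2)) := by
      intro i j hij
      have hval : f^[(i:ℕ)] w = f^[(j:ℕ)] w := congrArg Subtype.val hij
      have d1 := (hchain w hw i i.2).2.1
      have d2 := (hchain w hw j j.2).2.1
      rw [hval] at d1
      have : (i : ℕ) = (j : ℕ) := by
        have hi := i.2; have hj := j.2
        omega
      exact Fin.ext this
    calc d w = Nat.card (Fin (d w)) := by simp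
      _ ≤ Nat.card ↥V2 := Nat.card_le_card_of_injective _ hinj
      _ = k := hk.symm
  -- the bijection
  have hlt : ∀ x : ↥V2, d ↑x - 1 < k := by
    intro x
    have h1 := (hd ↑x x.2).2.1
    have h2 := hdk ↑x x.2
    omega
  set e : ↥V2 → Fin k := fun x => ⟨d ↑x - 1, hlt x⟩ with he
  have heinj : Function.Injective e := by
    intro a b hab
    have hv : d ↑a - 1 = d ↑b - 1 := congrArg Fin.val hab
    have h1 := (hd ↑a a.2).2.1
    have h2 := (hd ↑b b.2).2.1
    have : d ↑a = d ↑b := by omega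
    exact Subtype.ext (hdinj (d ↑a) ↑a a.2 ↑b b.2 rfl this.symm)
  have hbij : Function.Bijective e := by
    rw [Nat.bijective_iff_injective_and_card]
    exact ⟨heinj, by simp [hk]⟩
  -- adjacency lemmas
  have hadj_succ : ∀ x ∈ V2, ∀ y ∈ V2, d y = d x + 1 → G.Adj x y := by
    intro x hx y hy hdy
    have h1 := (hd x hx).2.1
    have hfyv : f y ≠ v := by
      intro h
      have := (hd1iff y hy).1 h
      omega
    have hfy2 : f y ∈ V2 := (hfmem y hy).resolve_left hfyv
    have hdfy : d (f y) = d x := by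
      have := (hchain y hy 1 (by omega)).2.1
      simpa [hdy] using this
    have : f y = x := hdinj (d x) _ hfy2 _ hx hdfy rfl
    exact this ▸ (hf y hy).2.1
  have hadj_only : ∀ x ∈ V2, ∀ y ∈ V2, G.Adj x y → d x < d y → d y = d x + 1 := by
    intro x hx y hy hadj hlt'
    by_contra hne
    have h2 : d x + 2 ≤ d y := by omega
    have hdxk : d x < k := by have := hdk y hy; omega
    obtain ⟨z, hz⟩ := hbij.2 ⟨d x, hdxk⟩
    have hz2 : (z : V) ∈ V2 := z.2
    have hdz : d (z : V) = d x + 1 := by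
      have hv1 : d (z : V) - 1 = d x := congrArg Fin.val hz
      have := (hd (z : V) hz2).2.1
      omega
    have hfzv : f ↑z ≠ v := by
      intro h
      have := (hd1iff ↑z hz2).1 h
      have := (hd x hx).2.1
      omega
    have hfz2 : f ↑z ∈ V2 := (hfmem ↑z hz2).resolve_left hfzv
    have hx1 : 1 ≤ d x := (hd x hx).2.1
    have hdfz : d (f ↑z) = d x := by
      have := (hchain ↑z hz2 1 (by omega)).2.1
      simpa [hdz] using this
    have hfz : f ↑z = x := hdinj (d x) _ hfz2 _ hx hdfz rfl
    have hyz : y ≠ (z : V) := by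
      intro hyz'
      rw [hyz'] at h2
      omega
    have hτy : τ y ≤ τ ↑z - 1 :=
      hτle y _ ((hf ↑z hz2).2.2 y (hfz ▸ hadj) hyz)
    -- chain from y down to z
    have hi1 : 1 ≤ d y - d ↑z := by omega
    have hi2 : d y - d ↑z < d y := by
      have := (hd ↑z hz2).2.1
      omega
    obtain ⟨hc1, hc2, _, hc4⟩ := hchain y hy (d y - d ↑z) hi2
    have heq : f^[d y - d ↑z] y = ↑z := by
      refine hdinj (d ↑z) _ hc1 _ hz2 ?_ rfl
      rw [hc2]
      omega
    have hτzy : τ ↑z < τ y := by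
      have h5 := hc4 hi1
      rwa [heq] at h5
    have := hτpos ↑z hz2
    omega
  -- assemble the isomorphism
  refine ⟨k, ⟨⟨Equiv.ofBijective e hbij, ?_⟩⟩⟩
  intro a b
  simp only [Equiv.ofBijective_apply, pathGraph_adj, he, comap_adj,
    Function.Embedding.coe_subtype]
  have h1 := (hd ↑a a.2).2.1
  have h2 := (hd ↑b b.2).2.1
  constructor
  · rintro (h | h)
    · exact hadj_succ ↑a a.2 ↑b b.2 (by omega)
    · exact (hadj_succ ↑b b.2 ↑a a.2 (by omega)).symm
  · intro h
    have hGadj : G.Adj ↑a ↑b := h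
    have hne : d ↑a ≠ d ↑b := by
      intro heq
      have : (a : V) = ↑b := hdinj (d ↑a) ↑a a.2 ↑b b.2 rfl heq.symm
      exact hGadj.ne this
    rcases Nat.lt_or_ge (d ↑a) (d ↑b) with hlt' | hge
    · have := hadj_only ↑a a.2 ↑b b.2 hGadj hlt'
      left; omega
    · have hlt'' : d ↑b < d ↑a := by omega
      have := hadj_only ↑b b.2 ↑a a.2 hGadj.symm hlt''
      right; omega
end

section
/- Let G be a connected graph different from a path and let ℓ be a leaf of G adjacent to a vertex of degree 2. Then ℓ does not belong to any minimum connected forcing set of G, and F_c(G) = F_c(G − ℓ). -/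
open SimpleGraph

/-!
A graph forced by a single vertex is a path: listing the vertices in the order they are colored,
every vertex that has already forced has only its list-neighbours as neighbours.

Let `w` be the other neighbour of `v`. If `ℓ` lies in a connected forcing set `S`, either
`S ⊆ {ℓ, v}`, and then `{ℓ}` forces `G` (it forces `v`), so `G` is a path; or `v, w ∈ S`, and
then `v` forces `ℓ` from `S \ {ℓ}`, a smaller connected forcing set. Hence a minimum connected
forcing set avoids `ℓ`, and it still forces `G - ℓ`, since `ℓ` can only be colored by `v`.
Conversely a connected forcing set of `G - ℓ` containing `v` but not `w` is `{v}`, which would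
make `G` a path again; otherwise it forces `G`, because in `G - ℓ` the vertex `w` is colored
no later than `v`, and then `v` forces `ℓ`.
-/

theorem List.Nodup.not_infix_pair_cons {α : Type*} {c z : α} {l : List α}
    (h : (c :: l).Nodup) : ¬ [z, c] <:+: c :: l := by
  rw [List.infix_cons_iff]
  rintro (hp | hi)
  · obtain ⟨rfl, hc⟩ := List.cons_prefix_cons.1 hp
    exact (List.nodup_cons.1 h).1 (hc.subset (by simp))
  · exact (List.nodup_cons.1 h).1 (hi.subset (by simp))

theorem List.Nodup.infix_pair_getElem_iff {α : Type*} {l : List α} (h : l.Nodup) {i j : ℕ}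
    (hi : i < l.length) (hj : j < l.length) : [l[i], l[j]] <:+: l ↔ i + 1 = j := by
  rw [List.infix_iff_getElem?]
  constructor
  · rintro ⟨k, -, hget⟩
    obtain ⟨hk, hki⟩ := List.getElem?_eq_some_iff.1 (hget 0 (by simp))
    obtain ⟨hk', hkj⟩ := List.getElem?_eq_some_iff.1 (hget 1 (by simp))
    simp only [List.getElem_cons_zero, List.getElem_cons_succ, h.getElem_inj_iff] at hki hkj
    omega
  · rintro rfl
    refine ⟨i, by simp; omega, fun n hn => ?_⟩
    match n, hn with
    | 0, _ => simp
    | 1, _ => simp [Nat.add_comm]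

namespace SimpleGraph

variable {V : Type*} {G : SimpleGraph V} {S T : Set V} {ℓ v w : V}

theorem Forced.trans (hST : ∀ s ∈ S, G.Forced T s) {x : V} (h : G.Forced S x) :
    G.Forced T x := by
  induction h with
  | init hv => exact hST _ hv
  | force _ hadj _ ihu ihoth => exact .force ihu hadj ihoth

theorem Forced.mem_of_closed {C : Set V}
    (hC : ∀ u ∈ C, ∀ x, G.Adj u x → (∀ y, G.Adj u y → y ≠ x → y ∈ C) → x ∈ C)
    (hSC : S ⊆ C) {x : V} (h : G.Forced S x) : x ∈ C := by
  induction h with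
  | init hv => exact hSC hv
  | force _ hadj _ ihu ihoth => exact hC _ ihu _ hadj ihoth

theorem IsForcingSet.of_forall_forced (hS : G.IsForcingSet S) (hST : ∀ s ∈ S, G.Forced T s) :
    G.IsForcingSet T :=
  fun x => (hS x).trans hST

theorem IsForcingSet.exists_force_of_subset {C : Set V} (hS : G.IsForcingSet S) (hSC : S ⊆ C)
    {y : V} (hy : y ∉ C) : ∃ u ∈ C, ∃ x ∉ C, G.Adj u x ∧ ∀ z, G.Adj u z → z ≠ x → z ∈ C := by
  by_contra! hC
  refine hy ((hS y).mem_of_closed (fun u hu x hux hN => ?_) hSC)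
  by_contra hx
  obtain ⟨z, huz, hzx, hz⟩ := hC u hu x hx hux
  exact hz (hN z huz hzx)

theorem IsForcingSet.mono (hS : G.IsForcingSet S) (hST : S ⊆ T) : G.IsForcingSet T :=
  hS.of_forall_forced fun _ hs => .init (hST hs)

/-- The list `c :: l` records, latest first, the vertices colored so far from a single initial
vertex; every vertex of `l` has already performed its force, so all its neighbors are next to it
in the list, and only the head `c` may force next. -/
structure IsForcingChain (G : SimpleGraph V) (c : V) (l : List V) : Prop where
  nodup : (c :: l).Nodup
  isChain : (c :: l).IsChain G.Adj
  infix_of_adj : ∀ y ∈ l, ∀ z, G.Adj y z → [y, z] <:+: c :: l ∨ [z, y] <:+: c :: l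

namespace IsForcingChain

variable {c x : V} {l : List V}

theorem cons (h : G.IsForcingChain c l) (hcx : G.Adj c x) (hx : x ∉ c :: l)
    (hN : ∀ y, G.Adj c y → y ≠ x → y ∈ c :: l) : G.IsForcingChain x (c :: l) where
  nodup := List.nodup_cons.2 ⟨hx, h.nodup⟩
  isChain := h.isChain.cons (by simpa using hcx.symm)
  infix_of_adj y hy z hyz := by
    have hxc : [x, c] <:+: x :: c :: l := (List.prefix_append [x, c] l).isInfix
    rcases List.mem_cons.1 hy with rfl | hy
    · by_cases hzx : z = x
      · exact .inr (hzx ▸ hxc)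
      · have hz : z ∈ l := (List.mem_cons.1 (hN z hyz hzx)).resolve_left hyz.ne'
        rcases h.infix_of_adj z hz y hyz.symm with hzy | hyz'
        · exact absurd hzy h.nodup.not_infix_pair_cons
        · exact .inl (List.infix_cons hyz')
    · exact (h.infix_of_adj y hy z hyz).imp List.infix_cons List.infix_cons

theorem exists_forall_mem [Fintype V] {S : Set V} (hS : G.IsForcingSet S) {c : V} {l : List V}
    (h : G.IsForcingChain c l) (hSl : ∀ s ∈ S, s ∈ c :: l) :
    ∃ c' l', G.IsForcingChain c' l' ∧ ∀ y, y ∈ c' :: l' := by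
  by_cases hall : ∀ y, y ∈ c :: l
  · exact ⟨c, l, h, hall⟩
  push Not at hall
  obtain ⟨y, hy⟩ := hall
  obtain ⟨u, hu, x, hx, hux, hN⟩ := hS.exists_force_of_subset (C := {y | y ∈ c :: l}) hSl hy
  have huc : u = c := by
    by_contra huc
    have hul : u ∈ l := (List.mem_cons.1 hu).resolve_left huc
    rcases h.infix_of_adj u hul x hux with hi | hi <;> exact hx (hi.subset (by simp))
  rw [huc] at hux hN
  have hlen : (c :: l).length < Fintype.card V :=
    (List.nodup_cons.2 ⟨hx, h.nodup⟩).length_le_card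
  exact exists_forall_mem hS (h.cons hux hx hN) fun s hs => List.mem_cons_of_mem x (hSl s hs)
termination_by Fintype.card V - (c :: l).length
decreasing_by simp only [List.length_cons] at hlen ⊢; omega

theorem isPathGraph (h : G.IsForcingChain c l) (hall : ∀ y, y ∈ c :: l) : G.IsPathGraph := by
  classical
  have hadj : ∀ y z, G.Adj y z ↔ [y, z] <:+: c :: l ∨ [z, y] <:+: c :: l := by
    refine fun y z => ⟨fun hyz => ?_, ?_⟩
    · rcases List.mem_cons.1 (hall y) with rfl | hy
      · have hz : z ∈ l := (List.mem_cons.1 (hall z)).resolve_left hyz.ne'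
        exact (h.infix_of_adj z hz y hyz.symm).symm
      · exact h.infix_of_adj y hy z hyz
    · rintro (hi | hi)
      · exact List.isChain_pair.1 (h.isChain.infix hi)
      · exact (List.isChain_pair.1 (h.isChain.infix hi)).symm
  let e := List.Nodup.getEquivOfForallMemList _ h.nodup hall
  refine ⟨(c :: l).length, ⟨RelIso.symm { toEquiv := e, map_rel_iff' := ?_ }⟩⟩
  intro i j
  simp only [e, List.Nodup.getEquivOfForallMemList_apply, List.get_eq_getElem, hadj,
    h.nodup.infix_pair_getElem_iff, pathGraph_adj]

end IsForcingChain

theorem isPathGraph_of_isForcingSet_singleton [Finite V] {x : V} (h : G.IsForcingSet {x}) :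
    G.IsPathGraph := by
  have := Fintype.ofFinite V
  have hx : G.IsForcingChain x [] := ⟨List.nodup_singleton x, List.isChain_singleton x, by simp⟩
  obtain ⟨c, l, hcl, hall⟩ := hx.exists_forall_mem h (by simp)
  exact hcl.isPathGraph hall

theorem isPathGraph_of_isForcingSet_pair [Finite V] (hℓ : ∀ z, G.Adj ℓ z → z = v)
    (hℓv : G.Adj ℓ v) (h : G.IsForcingSet {ℓ, v}) : G.IsPathGraph := by
  have hv : G.Forced {ℓ} v := .force (.init rfl) hℓv fun y hy hyv => absurd (hℓ y hy) hyv
  exact isPathGraph_of_isForcingSet_singleton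
    (h.of_forall_forced (T := {ℓ}) (by rintro s (rfl | rfl); exacts [.init rfl, hv]))

theorem subset_of_connected_induce {T : Set V} (hS : (G.induce S).Connected) {a : V}
    (haS : a ∈ S) (haT : a ∈ T) (hT : ∀ x ∈ S, x ∈ T → ∀ y ∈ S, G.Adj x y → y ∈ T) :
    S ⊆ T := by
  have hwalk : ∀ {x y : S} (p : (G.induce S).Walk x y), (x : V) ∈ T → (y : V) ∈ T := by
    intro x y p
    induction p with
    | nil => exact id
    | cons hxy _ ih => exact fun hx => ih (hT _ (Subtype.prop _) hx _ (Subtype.prop _) hxy)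
  intro t ht
  obtain ⟨p⟩ := hS.preconnected ⟨a, haS⟩ ⟨t, ht⟩
  exact hwalk p haT

theorem connected_induce_sdiff_singleton (hS : (G.induce S).Connected) {a b : V} (hbS : b ∈ S)
    (hba : b ≠ a) (ha : ∀ x, G.Adj a x → x = b) : (G.induce (S \ {a})).Connected := by
  have hleaf : ∀ x ∉ {x : S | (x : V) ≠ a}, ((G.induce S).neighborSet x).Subsingleton := by
    intro x hx y hy z hz
    obtain rfl : (x : V) = a := not_not.1 hx
    exact Subtype.ext ((ha _ hy).trans (ha _ hz).symm)
  have hpre := hS.preconnected.induce_of_degree_eq_one hleaf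
  let f : (G.induce S).induce {x : S | (x : V) ≠ a} →g G.induce (S \ {a}) :=
    induceHom (Embedding.induce S).toHom fun x hx => ⟨x.2, hx⟩
  have hf : Function.Surjective f := fun y => ⟨⟨⟨y, y.2.1⟩, y.2.2⟩, rfl⟩
  have : Nonempty ↑(S \ {a}) := ⟨⟨b, hbS, hba⟩⟩
  exact ⟨hpre.map f hf⟩

theorem Forced.delVert (hℓ : ∀ z, G.Adj ℓ z → z = v) (hℓS : ℓ ∉ S) {x : V}
    (h : G.Forced S x) :
    (∀ hx : x ≠ ℓ, (G.delVert ℓ).Forced (Subtype.val ⁻¹' S) ⟨x, hx⟩) ∧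
      (x = ℓ → ∀ hv : v ≠ ℓ, (G.delVert ℓ).Forced (Subtype.val ⁻¹' S) ⟨v, hv⟩) := by
  induction h with
  | init hx => exact ⟨fun _ => .init hx, fun hxℓ => absurd (hxℓ ▸ hx) hℓS⟩
  | @force u x _ hux _ ihu ihoth =>
    refine ⟨fun hx => ?_, ?_⟩
    · by_cases huℓ : u = ℓ
      · subst huℓ
        obtain rfl := hℓ x hux
        exact ihu.2 rfl hx
      · exact .force (ihu.1 huℓ) hux fun y hy hyx =>
          (ihoth y hy fun h => hyx (Subtype.ext h)).1 y.2
    · rintro rfl hv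
      obtain rfl := hℓ u hux.symm
      exact ihu.1 hv

theorem IsForcingSet.delVert (hℓ : ∀ z, G.Adj ℓ z → z = v) (hℓS : ℓ ∉ S)
    (hS : G.IsForcingSet S) : (G.delVert ℓ).IsForcingSet (Subtype.val ⁻¹' S) :=
  fun x => ((hS x).delVert hℓ hℓS).1 x.2

/-- In `G - ℓ` the vertex `v` can force `w` on its own, whereas in `G` it needs `ℓ` colored;
so the simulation in `G` carries the extra invariant that `w` is colored as soon as `v` is. -/
theorem Forced.of_delVert (hℓ : ∀ z, G.Adj ℓ z → z = v) (hv : ∀ z, G.Adj v z → z = ℓ ∨ z = w)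
    {S' : Set {x // x ≠ ℓ}} (hS'T : ∀ x ∈ S', (x : V) ∈ T)
    (hw : ∀ x ∈ S', (x : V) = v → G.Forced T w) {x : {x // x ≠ ℓ}}
    (h : (G.delVert ℓ).Forced S' x) :
    G.Forced T x ∧ ((x : V) = v → G.Forced T w) := by
  induction h with
  | init hx => exact ⟨.init (hS'T _ hx), hw _ hx⟩
  | @force u x _ hux _ ihu ihoth =>
    have hux : G.Adj (u : V) x := hux
    have hforce (huv : (u : V) ≠ v) : G.Forced T x :=
      .force ihu.1 hux fun y hy hyx => by
        have hyℓ : y ≠ ℓ := by rintro rfl; exact huv (hℓ _ hy.symm)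
        exact (ihoth ⟨y, hyℓ⟩ hy fun h => hyx (congrArg Subtype.val h)).1
    by_cases hxv : (x : V) = v
    · have huw : (u : V) = w := (hv _ (hxv ▸ hux.symm)).resolve_left u.2
      exact ⟨hforce (hxv ▸ hux.ne), fun _ => huw ▸ ihu.1⟩
    · refine ⟨?_, fun h => absurd h hxv⟩
      by_cases huv : (u : V) = v
      · have hxw : (x : V) = w := (hv _ (huv ▸ hux)).resolve_left x.2
        exact hxw ▸ ihu.2 huv
      · exact hforce huv

theorem IsForcingSet.of_delVert (hℓ : ∀ z, G.Adj ℓ z → z = v)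
    (hv : ∀ z, G.Adj v z → z = ℓ ∨ z = w) (hvℓ : G.Adj v ℓ) {S' : Set {x // x ≠ ℓ}}
    (hS' : (G.delVert ℓ).IsForcingSet S') (hS'T : ∀ x ∈ S', (x : V) ∈ T)
    (hw : ∀ x ∈ S', (x : V) = v → G.Forced T w) : G.IsForcingSet T := by
  have hforced (x : {x // x ≠ ℓ}) := (hS' x).of_delVert hℓ hv hS'T hw
  intro x
  by_cases hxℓ : x = ℓ
  · subst hxℓ
    refine .force (hforced ⟨v, hvℓ.ne⟩).1 hvℓ fun y hy hyx => ?_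
    obtain rfl := (hv y hy).resolve_left hyx
    exact (hforced ⟨v, hvℓ.ne⟩).2 rfl
  · exact (hforced ⟨x, hxℓ⟩).1

def induceDelVertIso (S : Set V) (hℓS : ℓ ∉ S) :
    (G.delVert ℓ).induce (Subtype.val ⁻¹' S) ≃g G.induce S where
  toFun x := ⟨x.1.1, x.2⟩
  invFun x := ⟨⟨x.1, fun h => hℓS (h ▸ x.2)⟩, x.2⟩
  left_inv _ := rfl
  right_inv _ := rfl
  map_rel_iff' := Iff.rfl

theorem IsConnForcingSet.delVert (hℓ : ∀ z, G.Adj ℓ z → z = v) (hℓS : ℓ ∉ S)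
    (hS : G.IsConnForcingSet S) : (G.delVert ℓ).IsConnForcingSet (Subtype.val ⁻¹' S) :=
  ⟨hS.1.delVert hℓ hℓS, (induceDelVertIso S hℓS).connected_iff.2 hS.2⟩

theorem IsConnForcingSet.of_delVert (hℓ : ∀ z, G.Adj ℓ z → z = v)
    (hv : ∀ z, G.Adj v z → z = ℓ ∨ z = w) (hvℓ : G.Adj v ℓ) {S' : Set {x // x ≠ ℓ}}
    (hS' : (G.delVert ℓ).IsConnForcingSet S')
    (hw : ∀ x ∈ S', (x : V) = v → w ∈ Subtype.val '' S') :
    G.IsConnForcingSet (Subtype.val '' S') := by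
  have hℓS : ℓ ∉ Subtype.val '' S' := fun ⟨y, _, hy⟩ => y.2 hy
  refine ⟨hS'.1.of_delVert hℓ hv hvℓ (fun x hx => ⟨x, hx, rfl⟩)
    (fun x hx hxv => .init (hw x hx hxv)), (induceDelVertIso _ hℓS).connected_iff.1 ?_⟩
  rw [Set.preimage_image_eq _ Subtype.val_injective]
  exact hS'.2

theorem czfNum_le (hS : G.IsConnForcingSet S) : G.czfNum ≤ S.ncard :=
  Nat.sInf_le ⟨S, rfl, hS⟩

theorem Connected.exists_isConnForcingSet_ncard_eq_czfNum (hG : G.Connected) :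
    ∃ S, G.IsConnForcingSet S ∧ S.ncard = G.czfNum := by
  obtain ⟨S, hS, hcard⟩ :=
    Nat.sInf_mem (s := {n | ∃ S : Set V, S.ncard = n ∧ G.IsConnForcingSet S})
      ⟨_, Set.univ, rfl, fun x => .init trivial, (induceUnivIso G).connected_iff.2 hG⟩
  exact ⟨S, hcard, hS⟩

theorem IsLeaf.adj_iff (h : G.IsLeaf ℓ) (hℓv : G.Adj ℓ v) (z : V) : G.Adj ℓ z ↔ z = v := by
  obtain ⟨a, ha⟩ := Set.ncard_eq_one.1 h
  have hv : v ∈ G.neighborSet ℓ := hℓv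
  rw [ha, Set.mem_singleton_iff] at hv
  rw [← mem_neighborSet, ha, hv, Set.mem_singleton_iff]

theorem exists_adj_iff_of_ncard_neighborSet_eq_two (h : (G.neighborSet v).ncard = 2)
    (hvℓ : G.Adj v ℓ) : ∃ w, ∀ z, G.Adj v z ↔ z = ℓ ∨ z = w := by
  obtain ⟨a, b, -, hab⟩ := Set.ncard_eq_two.1 h
  have hℓ : ℓ ∈ G.neighborSet v := hvℓ
  rw [hab] at hℓ
  rcases hℓ with rfl | rfl
  · exact ⟨b, fun z => by rw [← mem_neighborSet, hab]; rfl⟩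
  · exact ⟨a, fun z => by rw [← mem_neighborSet, hab, Set.pair_comm]; rfl⟩

theorem Connected.delVert (hG : G.Connected) (hℓ : ∀ z, G.Adj ℓ z → z = v) (hvℓ : v ≠ ℓ) :
    (G.delVert ℓ).Connected := by
  have := connected_induce_sdiff_singleton ((induceUnivIso G).connected_iff.2 hG)
    (Set.mem_univ v) hvℓ hℓ
  rwa [← Set.compl_eq_univ_sdiff, Set.compl_singleton_eq] at this

theorem czfNum_lt_ncard_of_mem [Finite V] (hℓ : ∀ z, G.Adj ℓ z ↔ z = v)
    (hv : ∀ z, G.Adj v z ↔ z = ℓ ∨ z = w) (hpair : ¬ G.IsForcingSet {ℓ, v})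
    (hS : G.IsConnForcingSet S) (hℓS : ℓ ∈ S) : G.czfNum < S.ncard := by
  have hvℓ : G.Adj v ℓ := (hv ℓ).2 (.inl rfl)
  by_cases hvw : v ∈ S ∧ w ∈ S
  · have hℓforced : G.Forced (S \ {ℓ}) ℓ :=
      .force (.init ⟨hvw.1, hvℓ.ne⟩) hvℓ fun y hy hyℓ => by
        obtain rfl := ((hv y).1 hy).resolve_left hyℓ
        exact .init ⟨hvw.2, hyℓ⟩
    have hS' : G.IsConnForcingSet (S \ {ℓ}) := by
      refine ⟨hS.1.of_forall_forced fun s hs => ?_,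
        connected_induce_sdiff_singleton hS.2 hvw.1 hvℓ.ne fun z hz => (hℓ z).1 hz⟩
      by_cases hsℓ : s = ℓ
      · exact hsℓ ▸ hℓforced
      · exact .init ⟨hs, hsℓ⟩
    exact (czfNum_le hS').trans_lt (Set.ncard_sdiff_singleton_lt_of_mem hℓS)
  · refine absurd (hS.1.mono ?_) hpair
    refine subset_of_connected_induce hS.2 hℓS (Set.mem_insert ℓ {v}) ?_
    rintro x hxS (rfl | rfl) y hyS hxy
    · exact .inr ((hℓ y).1 hxy)
    · rcases (hv y).1 hxy with rfl | rfl
      · exact .inl rfl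
      · exact absurd ⟨hxS, hyS⟩ hvw

theorem czfNum_delVert_le [Finite V] (hG : G.Connected) (hℓ : ∀ z, G.Adj ℓ z ↔ z = v)
    (hv : ∀ z, G.Adj v z ↔ z = ℓ ∨ z = w) (hpair : ¬ G.IsForcingSet {ℓ, v}) :
    (G.delVert ℓ).czfNum ≤ G.czfNum := by
  obtain ⟨S, hS, hcard⟩ := hG.exists_isConnForcingSet_ncard_eq_czfNum
  have hℓS : ℓ ∉ S := fun hℓS => (czfNum_lt_ncard_of_mem hℓ hv hpair hS hℓS).ne' hcard
  calc (G.delVert ℓ).czfNum ≤ (Subtype.val ⁻¹' S : Set {x // x ≠ ℓ}).ncard :=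
        czfNum_le (hS.delVert (fun z => (hℓ z).1) hℓS)
    _ = G.czfNum := by
      rw [Set.ncard_preimage_of_injective_subset_range Subtype.val_injective
        fun s hs => ⟨⟨s, ne_of_mem_of_not_mem hs hℓS⟩, rfl⟩, hcard]

theorem czfNum_le_czfNum_delVert (hG : G.Connected) (hℓ : ∀ z, G.Adj ℓ z ↔ z = v)
    (hv : ∀ z, G.Adj v z ↔ z = ℓ ∨ z = w) (hpair : ¬ G.IsForcingSet {ℓ, v}) :
    G.czfNum ≤ (G.delVert ℓ).czfNum := by
  have hvℓ : G.Adj v ℓ := (hv ℓ).2 (.inl rfl)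
  obtain ⟨S', hS', hcard⟩ :=
    (hG.delVert (fun z => (hℓ z).1) hvℓ.ne).exists_isConnForcingSet_ncard_eq_czfNum
  by_cases hw : ∀ x ∈ S', (x : V) = v → w ∈ Subtype.val '' S'
  · calc G.czfNum ≤ (Subtype.val '' S').ncard :=
          czfNum_le (hS'.of_delVert (fun z => (hℓ z).1) (fun z => (hv z).1) hvℓ hw)
      _ = (G.delVert ℓ).czfNum := by
        rw [Set.ncard_image_of_injective _ Subtype.val_injective, hcard]
  · push Not at hw
    obtain ⟨x, hxS', hxv, hwS'⟩ := hw
    have hS'x : S' ⊆ {x} := by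
      refine subset_of_connected_induce hS'.2 hxS' rfl fun y _ hyx z hzS' hyz => ?_
      rcases (hv z).1 (hxv ▸ hyx ▸ hyz) with hzℓ | hzw
      · exact absurd hzℓ z.2
      · exact absurd ⟨z, hzS', hzw⟩ hwS'
    have hwforced : G.Forced {ℓ, v} w :=
      .force (.init (.inr rfl)) ((hv w).2 (.inr rfl)) fun y hy hyw => by
        obtain rfl := ((hv y).1 hy).resolve_right hyw
        exact .init (.inl rfl)
    exact absurd (hS'.1.of_delVert (fun z => (hℓ z).1) (fun z => (hv z).1) hvℓ
      (fun y hy => .inr (hS'x hy ▸ hxv)) fun _ _ _ => hwforced) hpair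

end SimpleGraph

theorem leaf_next_to_degree_two_vertex {V : Type*} [Fintype V]
    (G : SimpleGraph V) (hG : G.Connected) (hnp : ¬ G.IsPathGraph)
    (ℓ v : V) (hleaf : G.IsLeaf ℓ) (hadj : G.Adj ℓ v)
    (hdeg : (G.neighborSet v).ncard = 2) :
    (∀ S : Set V, G.IsConnForcingSet S → S.ncard = G.czfNum → ℓ ∉ S) ∧
      G.czfNum = (G.delVert ℓ).czfNum := by
  have hℓ := hleaf.adj_iff hadj
  obtain ⟨w, hv⟩ := exists_adj_iff_of_ncard_neighborSet_eq_two hdeg hadj.symm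
  have hpair : ¬ G.IsForcingSet {ℓ, v} := fun h =>
    hnp (isPathGraph_of_isForcingSet_pair (fun z => (hℓ z).1) hadj h)
  exact ⟨fun S hS hcard hℓS => (czfNum_lt_ncard_of_mem hℓ hv hpair hS hℓS).ne' hcard,
    le_antisymm (czfNum_le_czfNum_delVert hG hℓ hv hpair) (czfNum_delVert_le hG hℓ hv hpair)⟩
end

section
/- Let G be a connected graph and v a vertex such that either G − v has at least 3 connected components, or G − v has exactly 2 connected components neither of which is a path. Then v is contained in every connected forcing set of G. -/
open SimpleGraph

/-!
Suppose `v ∉ S`. As `S` is connected, it lies in one component of `G − v`, and every other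
component is entered from outside only through `v`. If `v` has two neighbours in components
avoiding `S`, then `v` can never force into them, since whichever of the two is the target the
other is still uncolored; this is the case with three or more components. With two components,
if `v` has a single neighbour `x` in the second one `C`, then the forcing process on `C` is a
forcing process of `G[C]` started from `{x}`, and a finite graph forced by one vertex is a path:
that vertex has exactly one neighbour, so deleting it leaves a graph forced by that neighbour.
-/
theorem Nat.card_subtype_ne_add_one {α : Type*} [Finite α] (a : α) :
    Nat.card {b // b ≠ a} + 1 = Nat.card α := by
  classical
  rw [← Finite.card_option, Nat.card_congr (Equiv.optionSubtypeNe a)]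

namespace SimpleGraph

variable {V W : Type*} {G : SimpleGraph V}

theorem Forced.notMem_of_forall_adj_exists_ne {S C : Set V} (hS : Disjoint S C)
    (hC : ∀ u ∉ C, ∀ z ∈ C, G.Adj u z → ∃ z' ∈ C, z' ≠ z ∧ G.Adj u z') {z : V}
    (hz : G.Forced S z) : z ∉ C := by
  induction hz with
  | init hz => exact hS.notMem_of_mem_left hz
  | @force u z _ hadj _ hu hothers =>
    intro hzC
    obtain ⟨z', hz'C, hz'z, hadj'⟩ := hC u hu z hzC hadj
    exact hothers z' hadj' hz'z hz'C

theorem Forced.comap {H : SimpleGraph W} (f : H ↪g G) {S : Set V} {B : Set W}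
    (hS : ∀ z, f z ∈ S → z ∈ B)
    (hB : ∀ u z, u ∉ Set.range f → G.Adj u (f z) → z ∈ B) {z : W} (hz : G.Forced S (f z)) :
    H.Forced B z := by
  generalize hy : f z = y at hz
  induction hz generalizing z with
  | init hy' => exact .init (hS z (hy ▸ hy'))
  | @force u y _ hadj _ ihu ihothers =>
    subst hy
    by_cases hu : u ∈ Set.range f
    · obtain ⟨u, rfl⟩ := hu
      exact .force (ihu rfl) (f.map_adj_iff.mp hadj) fun x hx hxz =>
        ihothers (f x) (f.map_adj_iff.mpr hx) (f.injective.ne hxz) rfl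
    · exact .init (hB u z hu hadj)

theorem exists_adj_iff_eq_of_forced_singleton {w y : V} (hf : ∀ x, G.Forced {w} x)
    (hy : y ≠ w) : ∃ x, ∀ a, G.Adj w a ↔ a = x := by
  by_contra! h
  refine Forced.notMem_of_forall_adj_exists_ne (C := {w}ᶜ) (by simp) ?_ (hf y) hy
  intro u hu z _ hz
  obtain rfl : u = w := by simpa using hu
  obtain ⟨a, ha⟩ := h z
  have haz : a ≠ z := by rintro rfl; simp [hz] at ha
  have hua : G.Adj u a := by simpa [haz] using ha
  exact ⟨a, hua.ne', haz, hua⟩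

theorem pathGraph_adj_succ_succ {n : ℕ} {i j : Fin n} :
    (pathGraph (n + 1)).Adj i.succ j.succ ↔ (pathGraph n).Adj i j := by
  simp [pathGraph_adj]

theorem pathGraph_adj_zero_succ {n : ℕ} {i : Fin n} :
    (pathGraph (n + 1)).Adj 0 i.succ ↔ (i : ℕ) = 0 := by
  simp [pathGraph_adj]

def delVertEmbedding (G : SimpleGraph V) (v : V) : G.delVert v ↪g G :=
  Embedding.induce _

theorem exists_iso_pathGraph_succ {w x : V} (hx : x ≠ w) (hw : ∀ a, G.Adj w a ↔ a = x)
    {n : ℕ} (e : G.delVert w ≃g pathGraph n) (he : (e ⟨x, hx⟩ : ℕ) = 0) :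
    ∃ e' : G ≃g pathGraph (n + 1), e' w = 0 := by
  classical
  let f : V ≃ Fin (n + 1) := (Equiv.optionSubtypeNe w).symm.trans
    ((Equiv.optionCongr e.toEquiv).trans (finSuccEquiv n).symm)
  have hfw : f w = 0 := by simp [f]
  have hf (b : {b // b ≠ w}) : f b = (e b).succ := by
    simp [f, Equiv.optionSubtypeNe_symm_of_ne b.2]
  have he_eq_zero (b : {b // b ≠ w}) : (e b : ℕ) = 0 ↔ (b : V) = x := by
    rw [← he, Fin.val_inj, e.apply_eq_iff_eq, Subtype.ext_iff]
  refine ⟨⟨f, ?_⟩, hfw⟩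
  intro a b
  obtain ⟨a, rfl⟩ := (Equiv.optionSubtypeNe w).surjective a
  obtain ⟨b, rfl⟩ := (Equiv.optionSubtypeNe w).surjective b
  rcases a with _ | a <;> rcases b with _ | b <;>
    simp only [Equiv.optionSubtypeNe_none, Equiv.optionSubtypeNe_some, hfw, hf]
  · simp
  · rw [pathGraph_adj_zero_succ, hw, he_eq_zero]
  · rw [(pathGraph _).adj_comm, pathGraph_adj_zero_succ, G.adj_comm, hw, he_eq_zero]
  · exact pathGraph_adj_succ_succ.trans e.map_adj_iff

theorem exists_iso_pathGraph_of_forced_singleton [Finite V] {w : V}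
    (hf : ∀ x, G.Forced {w} x) {n : ℕ} (hn : Nat.card V = n + 1) :
    ∃ e : G ≃g pathGraph (n + 1), e w = 0 := by
  induction n generalizing V with
  | zero =>
    have : Subsingleton V := Finite.card_le_one_iff_subsingleton.mp hn.le
    refine ⟨⟨(Finite.equivFin V).trans (finCongr hn), fun {a b} => ?_⟩,
      Subsingleton.elim (α := Fin 1) _ _⟩
    simp [Subsingleton.elim a b]
  | succ n ih =>
    have : Nontrivial V := Finite.one_lt_card_iff_nontrivial.mp (by omega)
    obtain ⟨y, hy⟩ := exists_ne w
    obtain ⟨x, hw⟩ := exists_adj_iff_eq_of_forced_singleton hf hy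
    have hx : x ≠ w := ((hw x).mpr rfl).ne'
    have hf' (a : {a // a ≠ w}) : (G.delVert w).Forced {⟨x, hx⟩} a := by
      refine Forced.comap (G.delVertEmbedding w) (fun z hz => absurd hz z.2) ?_ (hf a)
      intro u z hu hadj
      obtain rfl : u = w := not_not.mp fun hu' => hu ⟨⟨u, hu'⟩, rfl⟩
      exact Subtype.ext ((hw z).mp hadj)
    have hn' : Nat.card {a // a ≠ w} = n + 1 := by
      have := Nat.card_subtype_ne_add_one w
      omega
    obtain ⟨e, he⟩ := ih hf' hn'
    exact exists_iso_pathGraph_succ hx hw e (by rw [he]; rfl)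

theorem isPathGraph_of_forced_singleton [Finite V] {w : V} (hf : ∀ x, G.Forced {w} x) :
    G.IsPathGraph := by
  obtain ⟨e, -⟩ := exists_iso_pathGraph_of_forced_singleton hf
    (Nat.succ_pred_eq_of_pos (Finite.card_pos_iff.mpr ⟨w⟩)).symm
  exact ⟨_, ⟨e⟩⟩

section DeleteVertex

variable {v : V}

theorem connectedComponentMk_delVert_eq_of_adj {a b : {w // w ≠ v}} (h : G.Adj a b) :
    (G.delVert v).connectedComponentMk a = (G.delVert v).connectedComponentMk b :=
  ConnectedComponent.connectedComponentMk_eq_of_adj h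

theorem exists_adj_mem_supp_delVert (hG : G.Connected)
    (c : (G.delVert v).ConnectedComponent) : ∃ x ∈ c.supp, G.Adj v x := by
  obtain ⟨y, rfl⟩ := c.exists_rep
  obtain ⟨p⟩ := hG.preconnected y v
  obtain ⟨d, -, ⟨x, hx, hxd⟩, hd⟩ := p.exists_boundary_dart
    (Subtype.val '' ((G.delVert v).connectedComponentMk y).supp) ⟨y, rfl, rfl⟩
    (by rintro ⟨z, -, hz⟩; exact z.2 hz)
  obtain ⟨⟨_, u⟩, hadj⟩ := d
  subst hxd
  obtain rfl : u = v := not_not.mp fun huv => hd ⟨⟨u, huv⟩,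
    (connectedComponentMk_delVert_eq_of_adj (b := ⟨u, huv⟩) hadj).symm.trans hx, rfl⟩
  exact ⟨x, hx, hadj.symm⟩

theorem exists_connectedComponent_delVert_of_connected {S : Set V}
    (hS : (G.induce S).Connected) (hvS : v ∉ S) :
    ∃ c : (G.delVert v).ConnectedComponent, ∀ z : {w // w ≠ v}, ↑z ∈ S → z ∈ c.supp := by
  have hSv : S ≤ {w | w ≠ v} := fun w hw => ne_of_mem_of_not_mem hw hvS
  obtain ⟨⟨s, hs⟩⟩ := hS.nonempty
  refine ⟨(G.delVert v).connectedComponentMk ⟨s, hSv hs⟩, fun z hz => ?_⟩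
  exact ConnectedComponent.sound
    ((hS.preconnected ⟨z, hz⟩ ⟨s, hs⟩).map (induceHomOfLE G hSv).toHom)

theorem not_isForcingSet_of_adj_of_adj {S : Set V} {T : Set (G.delVert v).ConnectedComponent}
    (hS : ∀ z : {w // w ≠ v}, ↑z ∈ S → (G.delVert v).connectedComponentMk z ∉ T)
    {a b : {w // w ≠ v}} (hab : a ≠ b) (ha : (G.delVert v).connectedComponentMk a ∈ T)
    (hb : (G.delVert v).connectedComponentMk b ∈ T) (hva : G.Adj v a) (hvb : G.Adj v b) :
    ¬ G.IsForcingSet S := by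
  intro hf
  refine Forced.notMem_of_forall_adj_exists_ne
    (C := Subtype.val '' {z | (G.delVert v).connectedComponentMk z ∈ T}) ?_ ?_ (hf a)
    ⟨a, ha, rfl⟩
  · rw [Set.disjoint_left]
    rintro _ hz ⟨z, hzT, rfl⟩
    exact hS z hz hzT
  · rintro u hu _ ⟨z, hzT, rfl⟩ hadj
    obtain rfl : u = v := not_not.mp fun huv => hu ⟨⟨u, huv⟩, show _ ∈ T from
      (connectedComponentMk_delVert_eq_of_adj (a := ⟨u, huv⟩) hadj) ▸ hzT, rfl⟩
    by_cases hza : z = a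
    · exact ⟨b, ⟨b, hb, rfl⟩, fun h => hab (hza ▸ Subtype.ext h).symm, hvb⟩
    · exact ⟨a, ⟨a, ha, rfl⟩, fun h => hza (Subtype.ext h).symm, hva⟩

theorem isPathGraph_induce_supp_of_isForcingSet [Finite V] {S : Set V}
    {c : (G.delVert v).ConnectedComponent}
    (hS : ∀ z : {w // w ≠ v}, ↑z ∈ S → z ∉ c.supp) {x : {w // w ≠ v}} (hx : x ∈ c.supp)
    (hvx : ∀ y ∈ c.supp, G.Adj v y ↔ y = x) (hf : G.IsForcingSet S) :
    ((G.delVert v).induce c.supp).IsPathGraph := by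
  let f := (G.delVertEmbedding v).comp (Embedding.induce c.supp)
  refine isPathGraph_of_forced_singleton (w := ⟨x, hx⟩) fun y =>
    Forced.comap f (fun z hz => absurd z.2 (hS _ hz)) ?_ (hf (f y))
  intro u z hu hadj
  obtain rfl : u = v := not_not.mp fun huv => hu ⟨⟨⟨u, huv⟩,
    (connectedComponentMk_delVert_eq_of_adj (a := ⟨u, huv⟩) hadj).trans z.2⟩, rfl⟩
  exact Subtype.ext ((hvx z z.2).mp hadj)

end DeleteVertex

end SimpleGraph

theorem cut_vertex_in_every_connected_forcing_set {V : Type*} [Fintype V]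
    (G : SimpleGraph V) (hG : G.Connected) (v : V)
    (h : 3 ≤ Nat.card (G.delVert v).ConnectedComponent ∨
      (Nat.card (G.delVert v).ConnectedComponent = 2 ∧
        ∀ c : (G.delVert v).ConnectedComponent,
          ¬ ((G.delVert v).induce c.supp).IsPathGraph)) :
    ∀ S : Set V, G.IsConnForcingSet S → v ∈ S := by
  rintro S ⟨hf, hS⟩
  by_contra hvS
  obtain ⟨c₁, hc₁⟩ := exists_connectedComponent_delVert_of_connected hS hvS
  have hS_notMem (c) (hc : c ≠ c₁) (z : {w // w ≠ v}) (hz : ↑z ∈ S) : z ∉ c.supp :=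
    fun hzc => hc (hzc.symm.trans (hc₁ z hz))
  have hcard := Nat.card_subtype_ne_add_one c₁
  rcases h with h3 | ⟨h2, hnotPath⟩
  · have : Nontrivial {c // c ≠ c₁} := Finite.one_lt_card_iff_nontrivial.mp (by omega)
    obtain ⟨⟨c₂, h₂⟩, ⟨c₃, h₃⟩, h₂₃⟩ := exists_pair_ne {c // c ≠ c₁}
    obtain ⟨a, ha, hva⟩ := exists_adj_mem_supp_delVert hG c₂
    obtain ⟨b, hb, hvb⟩ := exists_adj_mem_supp_delVert hG c₃
    refine not_isForcingSet_of_adj_of_adj (T := {c₂, c₃}) ?_ ?_ (.inl ha) (.inr hb) hva hvb hf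
    · rintro z hz (hz₂ | hz₃)
      exacts [hS_notMem c₂ h₂ z hz hz₂, hS_notMem c₃ h₃ z hz hz₃]
    · rintro rfl
      exact h₂₃ (Subtype.ext (ha.symm.trans hb))
  · obtain ⟨⟨c₂, h₂⟩⟩ : Nonempty {c // c ≠ c₁} := Finite.card_pos_iff.mp (by omega)
    obtain ⟨x, hx, hvx⟩ := exists_adj_mem_supp_delVert hG c₂
    by_cases hx_unique : ∀ y ∈ c₂.supp, G.Adj v y → y = x
    · exact hnotPath c₂ (isPathGraph_induce_supp_of_isForcingSet (hS_notMem c₂ h₂) hx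
        (fun y hy => ⟨hx_unique y hy, fun hyx => hyx ▸ hvx⟩) hf)
    · push Not at hx_unique
      obtain ⟨y, hy, hvy, hyx⟩ := hx_unique
      exact not_isForcingSet_of_adj_of_adj (T := {c₂}) (hS_notMem c₂ h₂) hyx hy hx hvy hvx hf
end

section
/- Let J_n be the flower snark of order n = 4k (k odd, k ≥ 3). Then F_c(J_n) ≤ n/4 + 2 = k + 2. Explicitly, the set {C_1,...,C_k, A_1, D_1} is a connected forcing set of J_n. -/
open SimpleGraph

/-- The flower snark `J_{4k}`.  A vertex `(j, t)` is `A_j, B_j, C_j, D_j`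
according to `t = 0, 1, 2, 3`. -/
def flowerSnark (k : ℕ) : SimpleGraph (Fin k × Fin 4) :=
  SimpleGraph.fromRel fun a b =>
    (a.1 = b.1 ∧ a.2 = 0 ∧ b.2 ≠ 0) ∨                                 -- star edges
    (a.2 = 1 ∧ b.2 = 1 ∧ ((a.1 : ℕ) + 1) % k = (b.1 : ℕ)) ∨           -- B-cycle
    (a.2 = 2 ∧ b.2 = 2 ∧ (a.1 : ℕ) + 1 = (b.1 : ℕ)) ∨                 -- C-path
    (a.2 = 3 ∧ b.2 = 3 ∧ (a.1 : ℕ) + 1 = (b.1 : ℕ)) ∨                 -- D-path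
    (a.2 = 2 ∧ b.2 = 3 ∧ (a.1 : ℕ) = k - 1 ∧ (b.1 : ℕ) = 0) ∨         -- C_k ~ D_1
    (a.2 = 3 ∧ b.2 = 2 ∧ (a.1 : ℕ) = k - 1 ∧ (b.1 : ℕ) = 0)           -- D_k ~ C_1

/-!
Write `C_j, A_j, D_j` with the paper's indices. Every `C_j` with `j ≠ 1` has all its neighbours
but `A_j` in the set (`C_k`'s outer neighbour is `D_1`), so it forces `A_j`. Then each `D_m` has
`A_m`, its `C`-neighbours and `D_{m-1}` coloured and forces `D_{m+1}`, and finally `A_j` forces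
`B_j`. The set is connected because `C_1, …, C_k` is a path and `C_1 ~ A_1 ~ D_1`.
-/

theorem SimpleGraph.Preconnected.induce_range {V W : Type*} {G : SimpleGraph V}
    {H : SimpleGraph W} (hH : H.Preconnected) (f : H →g G) :
    (G.induce (Set.range f)).Preconnected :=
  hH.map ⟨fun w => ⟨f w, w, rfl⟩, fun h => f.map_rel h⟩ fun ⟨_, w, hw⟩ => ⟨w, Subtype.ext hw⟩

namespace FlowerSnark

variable {k : ℕ}

lemma of_adj_A {j : Fin k} {x : Fin k × Fin 4} (h : (flowerSnark k).Adj (j, 0) x) :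
    x.1 = j ∧ x.2 ≠ 0 := by
  obtain ⟨x1, x2⟩ := x
  simp only [flowerSnark, fromRel_adj] at h
  grind

lemma of_adj_C {j : Fin k} {x : Fin k × Fin 4} (h : (flowerSnark k).Adj (j, 2) x) :
    x = (j, 0) ∨ x.2 = 2 ∨ (x.2 = 3 ∧ ((x.1 : ℕ) = 0 ∨ (j : ℕ) = 0)) := by
  obtain ⟨x1, x2⟩ := x
  simp only [flowerSnark, fromRel_adj] at h
  grind

lemma of_adj_D {j : Fin k} {x : Fin k × Fin 4} (h : (flowerSnark k).Adj (j, 3) x) :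
    x.2 = 0 ∨ x.2 = 2 ∨ (x.2 = 3 ∧ ((x.1 : ℕ) + 1 = j ∨ (j : ℕ) + 1 = x.1)) := by
  obtain ⟨x1, x2⟩ := x
  simp only [flowerSnark, fromRel_adj] at h
  grind

lemma adj_A (j : Fin k) {t : Fin 4} (ht : t ≠ 0) : (flowerSnark k).Adj (j, 0) (j, t) := by
  simp only [flowerSnark, fromRel_adj]
  grind

lemma adj_C_succ {i j : Fin k} (h : (i : ℕ) + 1 = j) : (flowerSnark k).Adj (i, 2) (j, 2) := by
  simp only [flowerSnark, fromRel_adj]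
  grind

lemma adj_D_succ {i j : Fin k} (h : (i : ℕ) + 1 = j) : (flowerSnark k).Adj (i, 3) (j, 3) := by
  simp only [flowerSnark, fromRel_adj]
  grind

def forcingSet (hk : 0 < k) : Set (Fin k × Fin 4) :=
  {p | p.2 = 2} ∪ {(⟨0, hk⟩, 0), (⟨0, hk⟩, 3)}

variable (hk : 0 < k)

lemma forced_C (j : Fin k) : (flowerSnark k).Forced (forcingSet hk) (j, 2) :=
  .init (Or.inl rfl)

lemma forced_A (j : Fin k) : (flowerSnark k).Forced (forcingSet hk) (j, 0) := by
  by_cases hj : (j : ℕ) = 0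
  · exact .init (Or.inr (Or.inl (by ext <;> simp [hj])))
  refine .force (forced_C hk j) (adj_A j (by decide)).symm fun x hx hne => ?_
  rcases of_adj_C hx with rfl | h2 | ⟨h3, h0 | h0⟩
  · exact absurd rfl hne
  · exact .init (Or.inl h2)
  · exact .init (Or.inr (Or.inr (by ext <;> simp [h0, h3])))
  · exact absurd h0 hj

lemma forced_D (j : Fin k) : (flowerSnark k).Forced (forcingSet hk) (j, 3) := by
  obtain ⟨m, hm⟩ := j
  induction m using Nat.strong_induction_on with
  | _ m ih =>
  rcases m with _ | m
  · exact .init (Or.inr (Or.inr rfl))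
  refine .force (ih m (by omega) (by omega)) (adj_D_succ rfl) fun ⟨⟨i, hi⟩, t⟩ hx hne => ?_
  rcases of_adj_D hx with h0 | h2 | ⟨h3, hpred | hsucc⟩
  · cases h0; exact forced_A hk _
  · exact .init (Or.inl h2)
  · cases h3; exact ih i (by change i + 1 = m at hpred; omega) hi
  · cases h3; change m + 1 = i at hsucc; exact absurd (by ext <;> simp [hsucc]) hne

lemma forced_B (j : Fin k) : (flowerSnark k).Forced (forcingSet hk) (j, 1) := by
  refine .force (forced_A hk j) (adj_A j (by decide)) fun x hx hne => ?_
  obtain ⟨rfl, ht⟩ := of_adj_A hx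
  obtain ⟨i, t⟩ := x
  fin_cases t
  · exact absurd rfl ht
  · exact absurd rfl hne
  · exact forced_C hk i
  · exact forced_D hk i

theorem isForcingSet : (flowerSnark k).IsForcingSet (forcingSet hk) := by
  rintro ⟨j, t⟩
  fin_cases t
  exacts [forced_A hk j, forced_B hk j, forced_C hk j, forced_D hk j]

def pathHomC (k : ℕ) : pathGraph k →g flowerSnark k where
  toFun j := (j, 2)
  map_rel' h := by
    rcases pathGraph_adj.mp h with h | h
    exacts [adj_C_succ h, (adj_C_succ h).symm]

lemma range_pathHomC : Set.range (pathHomC k) = {p | p.2 = 2} := by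
  ext ⟨j, t⟩
  simp [pathHomC, eq_comm]

lemma pathHomC_injective : Function.Injective (pathHomC k) :=
  fun _ _ h => (Prod.ext_iff.mp h).1

theorem connected_induce_forcingSet : ((flowerSnark k).induce (forcingSet hk)).Connected := by
  have hCconn : ((flowerSnark k).induce {p | p.2 = 2}).Preconnected :=
    range_pathHomC ▸ (pathGraph_preconnected k).induce_range (pathHomC k)
  refine connected_induce_union hCconn
    (induce_pair_connected_of_adj (adj_A _ (by decide))).preconnected
    (v := (⟨0, hk⟩, 2)) rfl (Or.inl rfl) (adj_A _ (by decide)).symm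

theorem ncard_forcingSet : (forcingSet hk).ncard = k + 2 := by
  have hdisj : Disjoint {p : Fin k × Fin 4 | p.2 = 2} {(⟨0, hk⟩, 0), (⟨0, hk⟩, 3)} := by
    rw [Set.disjoint_left]
    rintro p hp (rfl | rfl) <;> simp at hp
  rw [forcingSet, Set.ncard_union_eq hdisj, ← range_pathHomC,
    Set.ncard_range_of_injective pathHomC_injective, Set.ncard_pair (by simp),
    Nat.card_eq_fintype_card, Fintype.card_fin]

end FlowerSnark

theorem flowerSnark_connected_forcing (k : ℕ) (hk : 3 ≤ k) :
    (flowerSnark k).IsConnForcingSet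
      ({p : Fin k × Fin 4 | p.2 = 2} ∪
        {(⟨0, by omega⟩, 0), (⟨0, by omega⟩, 3)}) ∧
      (flowerSnark k).czfNum ≤ k + 2 := by
  have hk₀ : 0 < k := by omega
  have hS : (flowerSnark k).IsConnForcingSet (FlowerSnark.forcingSet hk₀) :=
    ⟨FlowerSnark.isForcingSet hk₀, FlowerSnark.connected_induce_forcingSet hk₀⟩
  exact ⟨hS, Nat.sInf_le ⟨_, FlowerSnark.ncard_forcingSet hk₀, hS⟩⟩
end

section
/- Let G be a connected graph of order n ≥ 2. Then F_c(G) = n − 1 if and only if G is the complete graph K_n (n ≥ 2) or the star K_{1,n−1} (n ≥ 4). -/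
open SimpleGraph

open SimpleGraph

section CFHelpers

variable {V : Type*}

lemma CF.reachable_induce_of_support {G : SimpleGraph V} {s : Set V} :
    ∀ {a b : V} (p : G.Walk a b), (∀ x ∈ p.support, x ∈ s) →
      ∀ (ha : a ∈ s) (hb : b ∈ s), (G.induce s).Reachable ⟨a, ha⟩ ⟨b, hb⟩
  | _, _, SimpleGraph.Walk.nil, _, _, _ => Reachable.refl _
  | _, _, @SimpleGraph.Walk.cons _ _ u v b h q, hp, ha, hb => by
    have hv : v ∈ s := hp v (by simp [SimpleGraph.Walk.support_cons, q.start_mem_support])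
    refine Reachable.trans ?_
      (CF.reachable_induce_of_support q
        (fun x hx => hp x (by simp [SimpleGraph.Walk.support_cons, hx])) hv hb)
    exact SimpleGraph.Adj.reachable (by exact h)

lemma CF.connected_induce_compl_max {W : Type*} {H : SimpleGraph W} (hc : H.Connected)
    (r w : W) (hmax : ∀ x, H.dist r x ≤ H.dist r w) (hrw : r ≠ w) :
    (H.induce {x | x ≠ w}).Connected := by
  classical
  have key : ∀ u : {x : W // x ∈ {x : W | x ≠ w}},
      (H.induce {x | x ≠ w}).Reachable ⟨r, hrw⟩ u := by
    rintro ⟨u, hu⟩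
    obtain ⟨p, hp⟩ := (hc r u).exists_walk_length_eq_dist
    have hw : w ∉ p.support := by
      intro hws
      have h1 := H.dist_le (p.takeUntil w hws)
      have h2 := H.dist_le (p.dropUntil w hws)
      have h3 : (p.takeUntil w hws).length + (p.dropUntil w hws).length = p.length := by
        rw [← SimpleGraph.Walk.length_append, SimpleGraph.Walk.take_spec]
      have h4 : H.dist r u ≤ H.dist r w := hmax u
      have h5 : H.dist w u = 0 := by omega
      have h6 := ((hc w u).dist_eq_zero_iff).mp h5
      exact hu h6.symm
    exact CF.reachable_induce_of_support p (fun x hx => fun (hxw : x = w) => hw (hxw ▸ hx)) hrw hu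
  haveI : Nonempty {x : W // x ∈ {x : W | x ≠ w}} := ⟨⟨r, hrw⟩⟩
  exact ⟨fun u v => (key u).symm.trans (key v)⟩

lemma CF.connected_induce_of_dominating (G : SimpleGraph V) (s : Set V) (c : V) (hc : c ∈ s)
    (hd : ∀ v ∈ s, v ≠ c → G.Adj c v) : (G.induce s).Connected := by
  have key : ∀ u : {x : V // x ∈ s}, (G.induce s).Reachable ⟨c, hc⟩ u := by
    rintro ⟨u, hu⟩
    by_cases h : u = c
    · subst h; exact Reachable.refl _
    · exact SimpleGraph.Adj.reachable (by exact hd u hu h)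
  haveI : Nonempty {x : V // x ∈ s} := ⟨⟨c, hc⟩⟩
  exact ⟨fun u v => (key u).symm.trans (key v)⟩

lemma CF.eq_of_reachable_no_edges {W : Type*} {H : SimpleGraph W} (hadj : ∀ a b, ¬ H.Adj a b)
    {u v : W} (h : H.Reachable u v) : u = v := by
  obtain ⟨p⟩ := h
  cases p with
  | nil => rfl
  | cons h' q => exact absurd h' (hadj _ _)

lemma CF.exists_adj_of_reachable_ne {G : SimpleGraph V} {x y : V} (h : G.Reachable x y)
    (hne : x ≠ y) : ∃ z, G.Adj x z := by
  obtain ⟨p⟩ := h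
  cases p with
  | nil => exact absurd rfl hne
  | cons h' q => exact ⟨_, h'⟩

lemma CF.exists_fourth [Fintype V] (h : 4 ≤ Fintype.card V) (a b c : V) :
    ∃ x, x ≠ a ∧ x ≠ b ∧ x ≠ c := by
  classical
  by_contra h'
  push_neg at h'
  have hsub : (Finset.univ : Finset V) ⊆ {a, b, c} := fun x _ => by
    by_cases h1 : x = a
    · simp [h1]
    by_cases hb : x = b
    · simp [hb]
    simp [h' x h1 hb]
  have h5 := Finset.card_le_card hsub
  have h6 : ({a, b, c} : Finset V).card ≤ 3 := by
    refine le_trans (Finset.card_insert_le _ _) ?_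
    have := Finset.card_insert_le b ({c} : Finset V)
    simp at this ⊢
    omega
  rw [Finset.card_univ] at h5
  omega

lemma CF.card_le_two_of [Fintype V] {a b : V} (h : ∀ v : V, v = a ∨ v = b) :
    Fintype.card V ≤ 2 := by
  classical
  have hsub : (Finset.univ : Finset V) ⊆ {a, b} := fun x _ => by
    rcases h x with rfl | rfl <;> simp
  have h5 := Finset.card_le_card hsub
  have h6 : ({a, b} : Finset V).card ≤ 2 := by
    refine le_trans (Finset.card_insert_le _ _) ?_
    simp
  rw [Finset.card_univ] at h5
  omega

lemma CF.ncard_ne_singleton [Fintype V] (a : V) :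
    ({x : V | x ≠ a}).ncard = Fintype.card V - 1 := by
  have he : ({x : V | x ≠ a}) = ({a} : Set V)ᶜ := by
    ext x; simp
  have h1 := Set.ncard_add_ncard_compl ({a} : Set V)
  rw [Set.ncard_singleton, Nat.card_eq_fintype_card] at h1
  rw [he]
  omega

lemma CF.ncard_ne_pair [Fintype V] {a b : V} (h : a ≠ b) :
    ({x : V | x ≠ a ∧ x ≠ b}).ncard = Fintype.card V - 2 := by
  have he : ({x : V | x ≠ a ∧ x ≠ b}) = ({a, b} : Set V)ᶜ := by
    ext x; simp [not_or]
  have h1 := Set.ncard_add_ncard_compl ({a, b} : Set V)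
  rw [Set.ncard_pair h, Nat.card_eq_fintype_card] at h1
  rw [he]
  omega

lemma CF.two_outside [Fintype V] {S : Set V} (h : S.ncard < Fintype.card V - 1) :
    ∃ a b, a ∉ S ∧ b ∉ S ∧ a ≠ b := by
  have h1 := Set.ncard_add_ncard_compl S
  rw [Nat.card_eq_fintype_card] at h1
  have h2 : 1 < Sᶜ.ncard := by omega
  obtain ⟨a, b, ha, hb, hab⟩ := (Set.one_lt_ncard_iff).mp h2
  exact ⟨a, b, ha, hb, hab⟩

end CFHelpers

section CFForcing

variable {V : Type*}

lemma CF.czf_le_of_triple [Fintype V] {G : SimpleGraph V} (hG : G.Connected) {a b u : V}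
    (hab : a ≠ b) (hua : u ≠ a) (hub : u ≠ b) (hadj : G.Adj u a) (hnadj : ¬ G.Adj u b)
    (hconn : (G.induce {x | x ≠ a ∧ x ≠ b}).Connected) :
    G.czfNum ≤ Fintype.card V - 2 := by
  set S : Set V := {x | x ≠ a ∧ x ≠ b} with hS
  have hmem : ∀ x, x ≠ a → x ≠ b → x ∈ S := fun x h1 h2 => ⟨h1, h2⟩
  have Fa : G.Forced S a :=
    SimpleGraph.Forced.force (SimpleGraph.Forced.init (hmem u hua hub)) hadj
      (fun x hx hxa => SimpleGraph.Forced.init (hmem x hxa (fun h => hnadj (h ▸ hx))))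
  have hall : ∀ x, x ≠ b → G.Forced S x := by
    intro x hxb
    by_cases hxa : x = a
    · exact hxa ▸ Fa
    · exact SimpleGraph.Forced.init (hmem x hxa hxb)
  obtain ⟨t, ht⟩ := CF.exists_adj_of_reachable_ne (hG b a) (Ne.symm hab)
  have Fb : G.Forced S b :=
    SimpleGraph.Forced.force (hall t ht.ne') ht.symm (fun x _ hxb => hall x hxb)
  have hforce : G.IsForcingSet S := by
    intro v
    by_cases hv : v = b
    · exact hv ▸ Fb
    · exact hall v hv
  have hncard : S.ncard = Fintype.card V - 2 := CF.ncard_ne_pair hab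
  exact Nat.sInf_le ⟨S, hncard, hforce, hconn⟩

lemma CF.czfNum_eq_card_sub_one_of [Fintype V] (G : SimpleGraph V)
    (hmem : ∃ S : Set V, S.ncard = Fintype.card V - 1 ∧ G.IsConnForcingSet S)
    (hlb : ∀ S : Set V, G.IsConnForcingSet S → Fintype.card V - 1 ≤ S.ncard) :
    G.czfNum = Fintype.card V - 1 := by
  obtain ⟨S, hSc, hcf⟩ := hmem
  have h1 : G.czfNum ≤ Fintype.card V - 1 := Nat.sInf_le ⟨S, hSc, hcf⟩
  have hne : {n | ∃ S : Set V, S.ncard = n ∧ G.IsConnForcingSet S}.Nonempty :=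
    ⟨_, S, hSc, hcf⟩
  obtain ⟨S₀, hS₀, hcf₀⟩ := Nat.sInf_mem hne
  have h2 := hlb S₀ hcf₀
  have h3 : G.czfNum = S₀.ncard := hS₀.symm
  omega

lemma CF.forced_top_subset [Fintype V] {S : Set V} {a b : V} (ha : a ∉ S) (hb : b ∉ S)
    (hab : a ≠ b) : ∀ v, (⊤ : SimpleGraph V).Forced S v → v ∈ S := by
  intro v hv
  induction hv with
  | init h => exact h
  | @force u w hu hadj hothers ihu ihothers =>
    exfalso
    by_cases haw : a = w
    · have hbw : b ≠ w := fun h => hab (haw ▸ h ▸ rfl)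
      have hbu : u ≠ b := fun h => hb (h ▸ ihu)
      exact hb (ihothers b hbu hbw)
    · have hau : u ≠ a := fun h => ha (h ▸ ihu)
      exact ha (ihothers a hau haw)

lemma CF.czf_top [Fintype V] (h2 : 2 ≤ Fintype.card V) :
    (⊤ : SimpleGraph V).czfNum = Fintype.card V - 1 := by
  classical
  apply CF.czfNum_eq_card_sub_one_of
  · obtain ⟨a, b, hab⟩ := Fintype.exists_pair_of_one_lt_card (α := V) (by omega)
    refine ⟨{x | x ≠ a}, CF.ncard_ne_singleton a, ?_, ?_⟩
    · intro v
      by_cases hv : v = a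
      · subst hv
        exact SimpleGraph.Forced.force (SimpleGraph.Forced.init (Ne.symm hab))
          (by simp [hab, Ne.symm hab]) (fun x hx hxv => SimpleGraph.Forced.init hxv)
      · exact SimpleGraph.Forced.init hv
    · exact CF.connected_induce_of_dominating _ _ b (Ne.symm hab)
        (fun v _ hvb => by simp [Ne.symm hvb])
  · intro S ⟨hforce, _⟩
    by_contra hlt
    push_neg at hlt
    obtain ⟨x, y, hx, hy, hxy⟩ := CF.two_outside hlt
    exact hx (CF.forced_top_subset hx hy hxy x (hforce x))

end CFForcing

section CFStar

variable {V : Type*}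

lemma CF.starlike_forced_subset {G : SimpleGraph V} {c : V} [Fintype V]
    (h1 : ∀ v, v ≠ c → G.Adj c v) (h2 : ∀ u v, G.Adj u v → u = c ∨ v = c)
    {S : Set V} (hcS : c ∈ S) {a b : V} (ha : a ∉ S) (hb : b ∉ S) (hab : a ≠ b) :
    ∀ v, G.Forced S v → v ∈ S := by
  intro v hv
  induction hv with
  | init h => exact h
  | @force u w hu hadj hothers ihu ihothers =>
    rcases h2 u w hadj with huc | hwc
    · exfalso
      by_cases haw : a = w
      · have hbw : b ≠ w := fun h => hab (haw ▸ h ▸ rfl)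
        have hbc : b ≠ c := fun h => hb (h ▸ hcS)
        exact hb (ihothers b (by rw [huc]; exact h1 b hbc) hbw)
      · have hac : a ≠ c := fun h => ha (h ▸ hcS)
        exact ha (ihothers a (by rw [huc]; exact h1 a hac) haw)
    · rw [hwc]; exact hcS

lemma CF.starlike_lb [Fintype V] {G : SimpleGraph V} {c : V}
    (h1 : ∀ v, v ≠ c → G.Adj c v) (h2 : ∀ u v, G.Adj u v → u = c ∨ v = c)
    (h4 : 4 ≤ Fintype.card V) :
    ∀ S : Set V, G.IsConnForcingSet S → Fintype.card V - 1 ≤ S.ncard := by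
  rintro S ⟨hforce, hconn⟩
  by_cases hcS : c ∈ S
  · by_contra hlt
    push_neg at hlt
    obtain ⟨a, b, ha, hb, hab⟩ := CF.two_outside hlt
    exact ha (CF.starlike_forced_subset h1 h2 hcS ha hb hab a (hforce a))
  · exfalso
    obtain ⟨⟨ℓ, hℓS⟩⟩ := hconn.nonempty
    have hnoedge : ∀ x y : {v : V // v ∈ S}, ¬ (G.induce S).Adj x y := by
      rintro ⟨x, hx⟩ ⟨y, hy⟩ hxy
      have : G.Adj x y := hxy
      rcases h2 x y this with rfl | rfl
      · exact hcS hx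
      · exact hcS hy
    have hsub : ∀ x ∈ S, x = ℓ := by
      intro x hx
      have := CF.eq_of_reachable_no_edges hnoedge (hconn.preconnected ⟨x, hx⟩ ⟨ℓ, hℓS⟩)
      exact congrArg Subtype.val this
    have key : ∀ v, G.Forced S v → v = ℓ ∨ v = c := by
      intro v hv
      induction hv with
      | init h => exact Or.inl (hsub _ h)
      | @force u w hu hadj hothers ihu ihothers =>
        rcases h2 u w hadj with huc | hwc
        · exfalso
          obtain ⟨x, hx1, hx2, hx3⟩ := CF.exists_fourth h4 c w ℓ
          rcases ihothers x (by rw [huc]; exact h1 x hx1) hx2 with h | h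
          · exact hx3 h
          · exact hx1 h
        · exact Or.inr hwc
    have hall : ∀ v : V, v = ℓ ∨ v = c := fun v => key v (hforce v)
    have := CF.card_le_two_of hall
    omega

lemma CF.starlike_mem [Fintype V] {G : SimpleGraph V} {c : V}
    (h1 : ∀ v, v ≠ c → G.Adj c v) (h2 : 2 ≤ Fintype.card V) :
    ∃ S : Set V, S.ncard = Fintype.card V - 1 ∧ G.IsConnForcingSet S := by
  obtain ⟨ℓ, hℓ⟩ := Fintype.exists_ne_of_one_lt_card (α := V) (by omega) c
  refine ⟨{x | x ≠ ℓ}, CF.ncard_ne_singleton ℓ, ?_, ?_⟩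
  · intro v
    by_cases hv : v = ℓ
    · subst hv
      exact SimpleGraph.Forced.force (SimpleGraph.Forced.init (Ne.symm hℓ))
        (h1 v hℓ) (fun x hx hxv => SimpleGraph.Forced.init hxv)
    · exact SimpleGraph.Forced.init hv
  · exact CF.connected_induce_of_dominating _ _ c (Ne.symm hℓ)
      (fun v _ hvc => h1 v hvc)

lemma CF.starlike_of_iso {G : SimpleGraph V} {m : ℕ}
    (φ : G ≃g completeBipartiteGraph (Fin 1) (Fin m)) :
    ∃ c, (∀ v, v ≠ c → G.Adj c v) ∧ ∀ u v, G.Adj u v → u = c ∨ v = c := by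
  refine ⟨φ.symm (Sum.inl 0), fun v hv => ?_, fun u v huv => ?_⟩
  · have hc : φ (φ.symm (Sum.inl 0)) = Sum.inl 0 := φ.apply_symm_apply _
    rw [← φ.map_adj_iff, hc]
    rcases hφv : φ v with x | j
    · exfalso
      apply hv
      have hx : φ v = Sum.inl 0 := by rw [hφv]; congr; exact Subsingleton.elim x 0
      calc v = φ.symm (φ v) := (φ.symm_apply_apply v).symm
        _ = φ.symm (Sum.inl 0) := by rw [hx]
    · simp
  · have h' : (completeBipartiteGraph (Fin 1) (Fin m)).Adj (φ u) (φ v) :=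
      φ.map_adj_iff.mpr huv
    have key : ∀ w : V, (∃ x : Fin 1, φ w = Sum.inl x) → w = φ.symm (Sum.inl 0) := by
      rintro w ⟨x, hx⟩
      have hx0 : φ w = Sum.inl 0 := by rw [hx]; congr; exact Subsingleton.elim x 0
      calc w = φ.symm (φ w) := (φ.symm_apply_apply w).symm
        _ = φ.symm (Sum.inl 0) := by rw [hx0]
    rcases hu : φ u with x | x <;> rcases hv' : φ v with y | y
    · rw [hu, hv'] at h'; simp at h'
    · exact Or.inl (key u ⟨x, hu⟩)
    · exact Or.inr (key v ⟨y, hv'⟩)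
    · rw [hu, hv'] at h'; simp at h'

lemma CF.iso_of_starlike [Fintype V] {G : SimpleGraph V} {c : V}
    (h1 : ∀ v, v ≠ c → G.Adj c v) (h2 : ∀ u v, G.Adj u v → u = c ∨ v = c) :
    Nonempty (G ≃g completeBipartiteGraph (Fin 1) (Fin (Fintype.card V - 1))) := by
  classical
  have hcard : Fintype.card {v : V // v ≠ c} = Fintype.card V - 1 := by
    have := Fintype.card_subtype_compl (fun v : V => v = c)
    simpa [Fintype.card_subtype_eq] using this
  let e2 : {v : V // v ≠ c} ≃ Fin (Fintype.card V - 1) := Fintype.equivFinOfCardEq hcard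
  let f : V → (Fin 1) ⊕ (Fin (Fintype.card V - 1)) := fun a =>
    if h : a = c then Sum.inl 0 else Sum.inr (e2 ⟨a, h⟩)
  let g : (Fin 1) ⊕ (Fin (Fintype.card V - 1)) → V :=
    Sum.elim (fun _ => c) (fun j => (e2.symm j).1)
  have hfg : Function.LeftInverse g f := by
    intro a
    by_cases h : a = c
    · simp [f, g, h]
    · simp [f, g, h]
  have hgf : Function.RightInverse g f := by
    rintro (i | j)
    · simp [f, g, Subsingleton.elim (0 : Fin 1) i]
    · have hne : (e2.symm j).1 ≠ c := (e2.symm j).2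
      simp only [f, g, Sum.elim_inr, dif_neg hne]
      have heq : (⟨(e2.symm j).1, hne⟩ : {v : V // v ≠ c}) = e2.symm j := Subtype.ext rfl
      rw [heq, Equiv.apply_symm_apply]
  refine ⟨⟨⟨f, g, hfg, hgf⟩, ?_⟩⟩
  intro a b
  simp only [Equiv.coe_fn_mk]
  by_cases ha : a = c <;> by_cases hb : b = c
  · subst ha; subst hb
    simp [f]
  · subst ha
    simp only [f, dif_pos rfl, dif_neg hb]
    simp [G.adj_comm, h1 b hb]
  · subst hb
    simp only [f, dif_neg ha, dif_pos rfl]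
    simp [(h1 a ha).symm]
  · simp only [f, dif_neg ha, dif_neg hb]
    simp only [completeBipartiteGraph_adj]
    simp only [Sum.isLeft_inr, Sum.isRight_inr, false_and, and_false, or_self]
    constructor
    · exact fun h => absurd h (by simp)
    · intro h
      rcases h2 a b h with rfl | rfl
      · exact absurd rfl ha
      · exact absurd rfl hb

end CFStar

theorem connected_forcing_eq_n_sub_one_iff {V : Type*} [Fintype V]
    (G : SimpleGraph V) (hG : G.Connected) (n : ℕ) (hn : n = Fintype.card V)
    (h2 : 2 ≤ n) :
    G.czfNum = n - 1 ↔
      (G = ⊤ ∨ (4 ≤ n ∧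
        Nonempty (G ≃g completeBipartiteGraph (Fin 1) (Fin (n - 1))))) := by
  classical
  subst hn
  constructor
  · intro hczf
    by_cases hcomp : G = ⊤
    · exact Or.inl hcomp
    obtain ⟨x, y, hxy, hnadj⟩ : ∃ x y, x ≠ y ∧ ¬ G.Adj x y := by
      by_contra h
      push_neg at h
      refine absurd ?_ hcomp
      ext a b
      simp only [top_adj]
      exact ⟨fun h' => h'.ne, fun h' => h a b h'⟩
    have hcard3 : 3 ≤ Fintype.card V := by
      by_contra hlt
      push_neg at hlt
      have hcard : Fintype.card V = 2 := by omega
      have hxyuniv : ∀ v : V, v = x ∨ v = y := by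
        have hsubuniv : ({x, y} : Finset V) = Finset.univ := by
          apply Finset.eq_univ_of_card
          rw [hcard, Finset.card_insert_of_notMem (by simp [hxy]), Finset.card_singleton]
        intro v
        have : v ∈ ({x, y} : Finset V) := hsubuniv ▸ Finset.mem_univ v
        simpa using this
      obtain ⟨t, ht⟩ := CF.exists_adj_of_reachable_ne (hG x y) hxy
      rcases hxyuniv t with rfl | rfl
      · exact ht.ne rfl
      · exact hnadj ht
    by_cases hstar : ∃ c, (∀ v, v ≠ c → G.Adj c v) ∧ ∀ u v, G.Adj u v → u = c ∨ v = c
    · obtain ⟨c, hc1, hc2⟩ := hstar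
      by_cases h4 : 4 ≤ Fintype.card V
      · exact Or.inr ⟨h4, CF.iso_of_starlike hc1 hc2⟩
      · exfalso
        push_neg at h4
        have hcard : Fintype.card V = 3 := by omega
        have hxc : x ≠ c := by
          intro h
          exact hnadj (by rw [h]; exact hc1 y (fun hy => hxy (h.trans hy.symm)))
        have hyc : y ≠ c := by
          intro h
          exact hnadj (by rw [h]; exact (hc1 x (fun hx => hxy (hx.trans h.symm))).symm)
        have henum : ∀ v : V, v = x ∨ v = y ∨ v = c := by
          have hsubuniv : ({x, y, c} : Finset V) = Finset.univ := by
            apply Finset.eq_univ_of_card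
            rw [hcard, Finset.card_insert_of_notMem (by simp [hxy, hxc]),
              Finset.card_insert_of_notMem (by simp [hyc]), Finset.card_singleton]
          intro v
          have : v ∈ ({x, y, c} : Finset V) := hsubuniv ▸ Finset.mem_univ v
          simpa using this
        have hFx : G.Forced {x} x := SimpleGraph.Forced.init rfl
        have hFc : G.Forced {x} c :=
          SimpleGraph.Forced.force hFx (hc1 x hxc).symm
            (fun t htx htc => by
              rcases hc2 x t htx with h | h
              · exact absurd h hxc
              · exact absurd h htc)
        have hFy : G.Forced {x} y :=
          SimpleGraph.Forced.force hFc (hc1 y hyc)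
            (fun t htc hty => by
              rcases henum t with rfl | rfl | rfl
              · exact hFx
              · exact absurd rfl hty
              · exact absurd htc (fun hh => hh.ne rfl))
        have hforce : G.IsForcingSet {x} := fun v => by
          rcases henum v with rfl | rfl | rfl
          · exact hFx
          · exact hFy
          · exact hFc
        have hconn1 : (G.induce {x}).Connected :=
          CF.connected_induce_of_dominating _ _ x rfl (fun v hv hvx => absurd hv hvx)
        have hle : G.czfNum ≤ 1 := Nat.sInf_le ⟨{x}, Set.ncard_singleton x, hforce, hconn1⟩
        omega
    · exfalso
      have h4 : 4 ≤ Fintype.card V := by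
        by_contra hlt
        push_neg at hlt
        have hcard : Fintype.card V = 3 := by omega
        obtain ⟨z, hz⟩ := CF.exists_adj_of_reachable_ne (hG x y) hxy
        have hzx : z ≠ x := Ne.symm hz.ne
        have hzy : z ≠ y := fun h => hnadj (h ▸ hz)
        have henum : ∀ v : V, v = x ∨ v = y ∨ v = z := by
          have hsubuniv : ({x, y, z} : Finset V) = Finset.univ := by
            apply Finset.eq_univ_of_card
            rw [hcard, Finset.card_insert_of_notMem (by simp [hxy, Ne.symm hzx]),
              Finset.card_insert_of_notMem (by simp [Ne.symm hzy]), Finset.card_singleton]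
          intro v
          have : v ∈ ({x, y, z} : Finset V) := hsubuniv ▸ Finset.mem_univ v
          simpa using this
        have hyz : G.Adj y z := by
          obtain ⟨t, ht⟩ := CF.exists_adj_of_reachable_ne (hG y x) (Ne.symm hxy)
          rcases henum t with rfl | rfl | rfl
          · exact absurd ht.symm hnadj
          · exact absurd ht (fun hh => hh.ne rfl)
          · exact ht
        apply hstar
        refine ⟨z, fun v hv => ?_, fun u v huv => ?_⟩
        · rcases henum v with rfl | rfl | rfl
          · exact hz.symm
          · exact hyz.symm
          · exact absurd rfl hv
        · rcases henum u with rfl | rfl | rfl <;> rcases henum v with rfl | rfl | rfl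
          · exact absurd huv (fun h => h.ne rfl)
          · exact absurd huv hnadj
          · exact Or.inr rfl
          · exact absurd huv (fun h => hnadj h.symm)
          · exact absurd huv (fun h => h.ne rfl)
          · exact Or.inr rfl
          · exact Or.inl rfl
          · exact Or.inl rfl
          · exact Or.inl rfl
      obtain ⟨r₀⟩ := hG.nonempty
      obtain ⟨p, -, hpmax'⟩ :=
        Finset.exists_max_image Finset.univ (G.dist r₀) ⟨r₀, Finset.mem_univ _⟩
      have hpmax : ∀ z, G.dist r₀ z ≤ G.dist r₀ p := fun z => hpmax' z (Finset.mem_univ z)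
      have hpr : r₀ ≠ p := by
        obtain ⟨v, hv⟩ := Fintype.exists_ne_of_one_lt_card (α := V) (by omega) r₀
        have h0 : 0 < G.dist r₀ v := hG.pos_dist_of_ne (Ne.symm hv)
        intro h
        have hd := hpmax v
        rw [← h, SimpleGraph.dist_self] at hd
        omega
      have hH : (G.induce {v : V | v ≠ p}).Connected :=
        CF.connected_induce_compl_max hG r₀ p hpmax hpr
      obtain ⟨p₁, hp₁⟩ := CF.exists_adj_of_reachable_ne (hG p r₀) (Ne.symm hpr)
      have hp₁p : p₁ ≠ p := hp₁.ne'
      obtain ⟨w', -, hw'max'⟩ :=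
        Finset.exists_max_image Finset.univ ((G.induce {v : V | v ≠ p}).dist ⟨p₁, hp₁p⟩)
          ⟨⟨p₁, hp₁p⟩, Finset.mem_univ _⟩
      have hw'max : ∀ z, (G.induce {v : V | v ≠ p}).dist ⟨p₁, hp₁p⟩ z ≤
          (G.induce {v : V | v ≠ p}).dist ⟨p₁, hp₁p⟩ w' :=
        fun z => hw'max' z (Finset.mem_univ z)
      by_cases hA : 2 ≤ (G.induce {v : V | v ≠ p}).dist ⟨p₁, hp₁p⟩ w'
      · have hrw' : (⟨p₁, hp₁p⟩ : {v : V // v ∈ {v : V | v ≠ p}}) ≠ w' := by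
          intro h
          rw [← h, SimpleGraph.dist_self] at hA
          omega
        have hKc := CF.connected_induce_compl_max hH ⟨p₁, hp₁p⟩ w' hw'max hrw'
        have hiso : ((G.induce {v : V | v ≠ p}).induce
              {yy : {v : V // v ∈ {v : V | v ≠ p}} | yy ≠ w'}) ≃g
            (G.induce {v : V | v ≠ p ∧ v ≠ (w' : V)}) :=
          { toFun := fun yy => ⟨yy.1.1, ⟨yy.1.2, fun h => yy.2 (Subtype.ext h)⟩⟩
            invFun := fun xx => ⟨⟨xx.1, xx.2.1⟩, fun h => xx.2.2 (congrArg Subtype.val h)⟩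
            left_inv := fun yy => rfl
            right_inv := fun xx => rfl
            map_rel_iff' := Iff.rfl }
        have hconn2 : (G.induce {v : V | v ≠ p ∧ v ≠ (w' : V)}).Connected :=
          hiso.connected_iff.mp hKc
        have hnadjw : ¬ G.Adj p₁ (w' : V) := by
          intro had
          have hHadj : (G.induce {v : V | v ≠ p}).Adj ⟨p₁, hp₁p⟩ w' := had
          have hd := (G.induce {v : V | v ≠ p}).dist_le hHadj.toWalk
          simp only [SimpleGraph.Adj.toWalk, SimpleGraph.Walk.length_cons,
            SimpleGraph.Walk.length_nil, Nat.zero_add] at hd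
          omega
        have hub : p₁ ≠ (w' : V) := fun h => hrw' (Subtype.ext h)
        have hab : p ≠ (w' : V) := Ne.symm w'.2
        have hfin := CF.czf_le_of_triple hG hab hp₁p hub hp₁.symm hnadjw hconn2
        omega
      · push_neg at hA
        have hdom : ∀ v, v ≠ p₁ → G.Adj p₁ v := by
          intro v hv
          by_cases hvp : v = p
          · rw [hvp]; exact hp₁.symm
          · have hvs : v ∈ {v : V | v ≠ p} := hvp
            have hne : (⟨p₁, hp₁p⟩ : {vv : V // vv ∈ {v : V | v ≠ p}}) ≠ ⟨v, hvs⟩ :=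
              fun h => hv (congrArg Subtype.val h).symm
            have h0 : 0 < (G.induce {v : V | v ≠ p}).dist ⟨p₁, hp₁p⟩ ⟨v, hvs⟩ :=
              hH.pos_dist_of_ne hne
            have h1 := hw'max ⟨v, hvs⟩
            have hd1 : (G.induce {v : V | v ≠ p}).dist ⟨p₁, hp₁p⟩ ⟨v, hvs⟩ = 1 := by omega
            have hadj : (G.induce {v : V | v ≠ p}).Adj ⟨p₁, hp₁p⟩ ⟨v, hvs⟩ :=
              SimpleGraph.dist_eq_one_iff_adj.mp hd1
            exact hadj
        by_cases htrip : ∃ a b u', a ≠ b ∧ u' ≠ a ∧ u' ≠ b ∧ a ≠ p₁ ∧ b ≠ p₁ ∧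
            G.Adj u' a ∧ ¬ G.Adj u' b
        · obtain ⟨a, b, u', h1', h2', h3', h4', h5', h6', h7'⟩ := htrip
          have hconn2 : (G.induce {v : V | v ≠ a ∧ v ≠ b}).Connected :=
            CF.connected_induce_of_dominating _ _ p₁ ⟨Ne.symm h4', Ne.symm h5'⟩
              (fun v _ hvp₁ => hdom v hvp₁)
          have := CF.czf_le_of_triple hG h1' h2' h3' h6' h7' hconn2
          omega
        · push_neg at htrip
          have PQ : ∀ c, c ≠ p₁ →
              (∀ d, d ≠ p₁ → d ≠ c → G.Adj c d) ∨ (∀ d, d ≠ p₁ → d ≠ c → ¬ G.Adj c d) := by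
            intro c hc
            by_cases hP : ∀ d, d ≠ p₁ → d ≠ c → G.Adj c d
            · exact Or.inl hP
            · push_neg at hP
              obtain ⟨b, hb1, hb2, hb3⟩ := hP
              refine Or.inr (fun d hd1 hd2 hcd => ?_)
              by_cases hdb : d = b
              · exact hb3 (hdb ▸ hcd)
              · exact hb3 (htrip d b c hdb hcd.ne (Ne.symm hb2) hd1 hb1 hcd)
          by_cases hPall : ∀ c, c ≠ p₁ → ∀ d, d ≠ p₁ → d ≠ c → G.Adj c d
          · apply hcomp
            ext a b
            simp only [top_adj]
            constructor
            · exact fun h => h.ne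
            · intro hne
              by_cases hap : a = p₁
              · rw [hap]; exact hdom b (fun h => hne (hap.trans h.symm))
              · by_cases hbp : b = p₁
                · rw [hbp]; exact (hdom a (fun h => hne (h.trans hbp.symm))).symm
                · exact hPall a hap b hbp (Ne.symm hne)
          · push_neg at hPall
            obtain ⟨c₀, hc₀p, d₀, hd₀p, hd₀c, hnadj₀⟩ := hPall
            have hQc₀ : ∀ d, d ≠ p₁ → d ≠ c₀ → ¬ G.Adj c₀ d := by
              rcases PQ c₀ hc₀p with hP | hQ
              · exact absurd (hP d₀ hd₀p hd₀c) hnadj₀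
              · exact hQ
            have hQ : ∀ e, e ≠ p₁ → ∀ d, d ≠ p₁ → d ≠ e → ¬ G.Adj e d := by
              intro e he
              by_cases hec : e = c₀
              · rw [hec]; exact hQc₀
              · rcases PQ e he with hP | hQe
                · exact absurd ((hP c₀ hc₀p (fun h => hec h.symm)).symm) (hQc₀ e he hec)
                · exact hQe
            apply hstar
            refine ⟨p₁, hdom, fun u v huv => ?_⟩
            by_cases hup : u = p₁
            · exact Or.inl hup
            by_cases hvp : v = p₁
            · exact Or.inr hvp
            exact absurd huv (hQ u hup v hvp huv.ne')
  · rintro (rfl | ⟨h4, ⟨φ⟩⟩)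
    · exact CF.czf_top h2
    · obtain ⟨c, hc1, hc2⟩ := CF.starlike_of_iso φ
      exact CF.czfNum_eq_card_sub_one_of G (CF.starlike_mem hc1 h2) (CF.starlike_lb hc1 hc2 h4)
end

section
/- For a connected graph G of order n ≥ 2, F(G) = n − 1 if and only if G = K_n. -/
open SimpleGraph

lemma exists_neighbor {V : Type*} [Fintype V] (G : SimpleGraph V) (hG : G.Connected)
    (h2 : 2 ≤ Fintype.card V) (u : V) : ∃ y, G.Adj u y := by
  obtain ⟨v, hv⟩ := Fintype.exists_ne_of_one_lt_card (by omega) u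
  obtain ⟨p⟩ := hG.preconnected u v
  cases p with
  | nil => exact absurd rfl hv.symm
  | cons h p => exact ⟨_, h⟩

lemma forcing_of_not_adj {V : Type*} [Fintype V] (G : SimpleGraph V) (hG : G.Connected)
    (h2 : 2 ≤ Fintype.card V) {u w x : V} (hne : u ≠ w) (huw : ¬ G.Adj u w)
    (hx : G.Adj w x) : G.IsForcingSet ({u, x} : Set V)ᶜ := by
  set S : Set V := ({u, x} : Set V)ᶜ with hS
  have hmem : ∀ v : V, v ≠ u → v ≠ x → G.Forced S v := fun v h1 h2 =>
    Forced.init (by simp [hS, h1, h2])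
  have hwu : w ≠ u := hne.symm
  have hwx : w ≠ x := hx.ne
  have hxu : x ≠ u := by rintro rfl; exact huw hx.symm
  have hFx : G.Forced S x := by
    refine Forced.force (hmem w hwu hwx) hx ?_
    intro y hy hyx
    refine hmem y ?_ hyx
    rintro rfl; exact huw hy.symm
  have hFu : G.Forced S u := by
    obtain ⟨y, hy⟩ := exists_neighbor G hG h2 u
    have hFy : G.Forced S y := by
      by_cases hyx : y = x
      · rw [hyx]; exact hFx
      · exact hmem y (fun h => hy.ne h.symm) hyx
    refine Forced.force hFy hy.symm ?_
    intro z hz hzu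
    by_cases hzx : z = x
    · rw [hzx]; exact hFx
    · exact hmem z hzu hzx
  intro v
  by_cases hvu : v = u
  · subst hvu; exact hFu
  by_cases hvx : v = x
  · subst hvx; exact hFx
  exact hmem v hvu hvx

lemma top_forced_ne {V : Type*} {S : Set V} {a b : V} (ha : a ∉ S) (hb : b ∉ S)
    (hab : a ≠ b) : ∀ v, (⊤ : SimpleGraph V).Forced S v → v ≠ a ∧ v ≠ b := by
  intro v hv
  induction hv with
  | init hv => exact ⟨fun h => ha (h ▸ hv), fun h => hb (h ▸ hv)⟩
  | @force p q hp hadj hothers ih ihs =>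
    constructor
    · rintro rfl
      have hbp : b ≠ p := fun h => ih.2 h.symm
      exact (ihs b (by simpa [top_adj] using hbp.symm) hab.symm).2 rfl
    · rintro rfl
      have hap : a ≠ p := fun h => ih.1 h.symm
      exact (ihs a (by simpa [top_adj] using hap.symm) hab).1 rfl

lemma top_forcing_ncard {V : Type*} [Fintype V] {S : Set V}
    (hS : (⊤ : SimpleGraph V).IsForcingSet S) : Fintype.card V - 1 ≤ S.ncard := by
  have hc : Sᶜ.ncard ≤ 1 := by
    by_contra h
    push_neg at h
    obtain ⟨a, b, ha, hb, hab⟩ := Set.one_lt_ncard_iff (Sᶜ.toFinite) |>.mp h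
    exact (top_forced_ne ha hb hab a (hS a)).1 rfl
  have h2 := Set.ncard_add_ncard_compl S
  rw [Nat.card_eq_fintype_card] at h2
  omega

theorem forcing_eq_n_sub_one_iff_complete {V : Type*} [Fintype V]
    (G : SimpleGraph V) (hG : G.Connected) (n : ℕ) (hn : n = Fintype.card V)
    (h2 : 2 ≤ n) :
    G.zfNum = n - 1 ↔ G = ⊤ := by
  subst hn
  constructor
  · intro h
    by_contra hne
    obtain ⟨u, w, huw, hadj⟩ : ∃ u w, u ≠ w ∧ ¬ G.Adj u w := by
      by_contra hc
      push_neg at hc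
      apply hne
      ext a b
      simp only [top_adj]
      exact ⟨fun h => h.ne, fun h => hc a b h⟩
    obtain ⟨x, hx⟩ := exists_neighbor G hG h2 w
    have hforce := forcing_of_not_adj G hG h2 huw hadj hx
    have hxu : x ≠ u := by rintro rfl; exact hadj hx.symm
    have hcard : (({u, x} : Set V)ᶜ).ncard = Fintype.card V - 2 := by
      have h1 : ({u, x} : Set V).ncard = 2 := Set.ncard_pair hxu.symm
      have hcc := Set.ncard_add_ncard_compl ({u, x} : Set V)
      rw [Nat.card_eq_fintype_card] at hcc
      omega
    have hle : G.zfNum ≤ Fintype.card V - 2 :=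
      Nat.sInf_le ⟨_, hcard, hforce⟩
    omega
  · rintro rfl
    obtain ⟨a⟩ : Nonempty V := Fintype.card_pos_iff.mp (by omega)
    have hforce : (⊤ : SimpleGraph V).IsForcingSet ({a} : Set V)ᶜ := by
      have hmem : ∀ v : V, v ≠ a → (⊤ : SimpleGraph V).Forced ({a} : Set V)ᶜ v :=
        fun v h1 => Forced.init (by simp [h1])
      obtain ⟨b, hb⟩ := Fintype.exists_ne_of_one_lt_card (by omega) a
      have hFa : (⊤ : SimpleGraph V).Forced ({a} : Set V)ᶜ a := by
        refine Forced.force (hmem b hb) (by simpa [top_adj] using hb) ?_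
        intro z hz hza
        exact hmem z hza
      intro v
      by_cases hva : v = a
      · subst hva; exact hFa
      · exact hmem v hva
    have hcard : (({a} : Set V)ᶜ).ncard = Fintype.card V - 1 := by
      have hcc := Set.ncard_add_ncard_compl ({a} : Set V)
      rw [Nat.card_eq_fintype_card] at hcc
      simp only [Set.ncard_singleton] at hcc
      omega
    refine le_antisymm (Nat.sInf_le ⟨_, hcard, hforce⟩) ?_
    refine le_csInf ⟨Fintype.card V - 1, _, hcard, hforce⟩ ?_
    rintro m ⟨S, rfl, hS⟩
    exact top_forcing_ncard hS
end

section
/- If R is a forcing set of a graph G, then each vertex of G can force at most one vertex during the entire forcing process; consequently the set of forces partitions V(G) into |R| forcing chains, each of which induces a path in G with its initial vertex in R. -/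
open SimpleGraph

/-- `ValidForcingSeq G S L` says that the chronological list of forces `L`
(`(u, w)` meaning "`u` forces `w`") is a valid run of the forcing process
starting from the colored set `S`. -/
def ValidForcingSeq {V : Type*} (G : SimpleGraph V) : Set V → List (V × V) → Prop
  | _, [] => True
  | S, (u, w) :: rest =>
      u ∈ S ∧ w ∉ S ∧ G.Adj u w ∧ (∀ x, G.Adj u x → x ≠ w → x ∈ S) ∧
        ValidForcingSeq G (insert w S) rest

/-!
After `u` forces `w`, every neighbour of `u` is colored, so `u` never forces again; hence each
vertex forces at most once. The chains are built by induction on the list of forces, peeling off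
the first force `(u, w)`: starting from `S ∪ {w}`, the remaining forces give chains in which `u`
is alone (it can no longer force), and the new chain of `u` is `u` followed by the chain of `w`.
This is again an induced path: the neighbours of `u` other than `w` are colored already, whereas
every vertex after `w` on the chain of `w` is colored later.
-/

theorem List.IsChain.exists_rel_of_mem_tail {α : Type*} {R : α → α → Prop} {l : List α}
    (h : l.IsChain R) {b : α} (hb : b ∈ l.tail) : ∃ a, R a b := by
  induction h with
  | nil => simp at hb
  | singleton => simp at hb
  | cons_cons hab _ ih =>
    rcases List.mem_cons.1 hb with rfl | hb
    · exact ⟨_, hab⟩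
    · exact ih hb

section

variable {V : Type*} {G : SimpleGraph V}

namespace ValidForcingSeq

theorem snd_notMem : ∀ {S : Set V} {L : List (V × V)}, ValidForcingSeq G S L → ∀ p ∈ L, p.2 ∉ S
  | _, [], _, _, hp => by simp at hp
  | _, (_, _) :: _, ⟨_, hw, _, _, hL⟩, _, hp => by
    rcases List.mem_cons.1 hp with rfl | hp
    · exact hw
    · exact fun hS => hL.snd_notMem _ hp (Set.mem_insert_of_mem _ hS)

theorem neighborSet_subset_insert {S : Set V} {u w : V} {L : List (V × V)}
    (h : ValidForcingSeq G S ((u, w) :: L)) : G.neighborSet u ⊆ insert w S := by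
  intro x hx
  by_cases hxw : x = w
  · exact hxw ▸ Set.mem_insert x S
  · exact Set.mem_insert_of_mem w (h.2.2.2.1 x hx hxw)

theorem notMem_of_neighborSet_subset {u : V} :
    ∀ {S : Set V} {L : List (V × V)}, ValidForcingSeq G S L → G.neighborSet u ⊆ S →
      ∀ y, (u, y) ∉ L
  | _, [], _, _, _, hy => by simp at hy
  | _, (_, _) :: _, ⟨_, hw, hadj, _, hL⟩, hN, _, hy => by
    rcases List.mem_cons.1 hy with ⟨rfl, rfl⟩ | hy
    · exact hw (hN hadj)
    · exact hL.notMem_of_neighborSet_subset (hN.trans (Set.subset_insert _ _)) _ hy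

theorem nodup_map_fst :
    ∀ {S : Set V} {L : List (V × V)}, ValidForcingSeq G S L → (L.map Prod.fst).Nodup
  | _, [], _ => List.nodup_nil
  | _, (u, _) :: _, h@⟨_, _, _, _, hL⟩ => by
    refine List.nodup_cons.2 ⟨?_, hL.nodup_map_fst⟩
    rintro hu
    obtain ⟨⟨_, y⟩, hy, rfl⟩ := List.mem_map.1 hu
    exact hL.notMem_of_neighborSet_subset h.neighborSet_subset_insert y hy

end ValidForcingSeq

def IsInducedPath (G : SimpleGraph V) (l : List V) : Prop :=
  l.Nodup ∧ G.comap l.get = pathGraph l.length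

theorem isInducedPath_singleton (v : V) : IsInducedPath G [v] := by
  refine ⟨List.nodup_singleton v, ?_⟩
  ext i j
  obtain rfl : i = j := Subsingleton.elim (α := Fin 1) i j
  simp

theorem IsInducedPath.cons {u w : V} {t : List V}
    (h : IsInducedPath G (w :: t)) (hu : u ∉ w :: t)
    (hadj : ∀ x ∈ w :: t, G.Adj u x ↔ x = w) : IsInducedPath G (u :: w :: t) := by
  obtain ⟨hnodup, hpath⟩ := h
  have hfirst (j : Fin (w :: t).length) : G.Adj u (w :: t)[(j : ℕ)] ↔ j = 0 :=
    (hadj _ (List.get_mem _ _)).trans (hnodup.get_inj_iff (j := 0))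
  have hrest (i j : Fin (w :: t).length) :
      G.Adj (w :: t)[(i : ℕ)] (w :: t)[(j : ℕ)] ↔ (i : ℕ) + 1 = j ∨ (j : ℕ) + 1 = i := by
    rw [← pathGraph_adj, ← hpath]; rfl
  refine ⟨List.nodup_cons.2 ⟨hu, hnodup⟩, ?_⟩
  ext i j
  cases i using Fin.cases <;> cases j using Fin.cases <;>
    simp [pathGraph_adj, hfirst, hrest, G.adj_comm _ u]

theorem IsInducedPath.isPathGraph {l : List V} (h : IsInducedPath G l) :
    (G.induce {x | x ∈ l}).IsPathGraph := by
  classical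
  have hcomap : (G.induce {x | x ∈ l}).comap (h.1.getEquiv l) = pathGraph l.length := h.2
  exact ⟨l.length, ⟨hcomap ▸ (Iso.comap (h.1.getEquiv l) _).symm⟩⟩

theorem existsUnique_mem_merge [DecidableEq V] {S : Set V} {c : V → List V} {u w : V}
    (hu : u ∈ S) (hw : w ∉ S) (hcu : c u = [u]) (hc : ∀ x, ∃! r : ↥(insert w S), x ∈ c r)
    (x : V) : ∃! r : S, x ∈ if (r : V) = u then u :: c w else c r := by
  have hmem (r : V) : x ∈ (if r = u then u :: c w else c r) ↔ x ∈ c r ∨ r = u ∧ x ∈ c w := by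
    split_ifs with h <;> simp [h, hcu]
  obtain ⟨⟨r', hr'⟩, hx, huniq⟩ := hc x
  simp only [hmem]
  have huniq' (r : V) (hr : r ∈ S) (h : x ∈ c r) : r = r' :=
    congrArg Subtype.val (huniq ⟨r, Set.mem_insert_of_mem w hr⟩ h)
  by_cases hr'w : r' = w
  · refine ⟨⟨u, hu⟩, Or.inr ⟨rfl, hr'w ▸ hx⟩, ?_⟩
    rintro ⟨r, hr⟩ (h | ⟨rfl, _⟩)
    · exact absurd ((huniq' r hr h).trans hr'w ▸ hr) hw
    · rfl
  · refine ⟨⟨r', hr'.resolve_left hr'w⟩, Or.inl hx, ?_⟩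
    rintro ⟨r, hr⟩ (h | ⟨_, h⟩)
    · exact Subtype.ext (huniq' r hr h)
    · exact absurd (congrArg Subtype.val (huniq ⟨w, Set.mem_insert w S⟩ h)).symm hr'w

/-- `c r` is the forcing chain starting at `r`; only the values of `c` on `S` matter. -/
structure IsForcingChainCover (G : SimpleGraph V) (S : Set V) (L : List (V × V))
    (c : V → List V) : Prop where
  head?_eq : ∀ r ∈ S, (c r).head? = some r
  isChain : ∀ r ∈ S, (c r).IsChain fun a b => (a, b) ∈ L
  isInducedPath : ∀ r ∈ S, IsInducedPath G (c r)
  existsUnique_mem : ∀ x, ∃! r : S, x ∈ c r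

namespace IsForcingChainCover

variable {S : Set V} {L : List (V × V)} {c : V → List V}

theorem nil (hS : S = Set.univ) : IsForcingChainCover G S [] fun r => [r] where
  head?_eq _ _ := rfl
  isChain r _ := List.isChain_singleton r
  isInducedPath r _ := isInducedPath_singleton r
  existsUnique_mem x := ⟨⟨x, hS ▸ Set.mem_univ x⟩, List.mem_singleton_self x,
    fun _ hr => Subtype.ext (List.mem_singleton.1 hr).symm⟩

theorem notMem_of_mem_tail (hc : IsForcingChainCover G S L c) (hL : ValidForcingSeq G S L)
    {r x : V} (hr : r ∈ S) (hx : x ∈ (c r).tail) : x ∉ S :=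
  have ⟨a, ha⟩ := (hc.isChain r hr).exists_rel_of_mem_tail hx
  hL.snd_notMem (a, x) ha

theorem eq_singleton (hc : IsForcingChainCover G S L c) {r : V} (hr : r ∈ S)
    (hnf : ∀ y, (r, y) ∉ L) : c r = [r] := by
  obtain ⟨t, ht⟩ := List.head?_eq_some_iff.1 (hc.head?_eq r hr)
  match t, ht with
  | [], ht => exact ht
  | y :: _, ht => exact absurd (ht ▸ hc.isChain r hr).rel (hnf y)

theorem cons [DecidableEq V] {u w : V} (hL : ValidForcingSeq G S ((u, w) :: L))
    (hc : IsForcingChainCover G (insert w S) L c) :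
    IsForcingChainCover G S ((u, w) :: L) fun r => if r = u then u :: c w else c r := by
  have hN := hL.neighborSet_subset_insert
  obtain ⟨hu, hw, hadj, -, hL'⟩ := hL
  have huS' : u ∈ insert w S := Set.mem_insert_of_mem w hu
  have hwS' : w ∈ insert w S := Set.mem_insert w S
  have hcu : c u = [u] := hc.eq_singleton huS' (hL'.notMem_of_neighborSet_subset hN)
  obtain ⟨t, hcw⟩ := List.head?_eq_some_iff.1 (hc.head?_eq w hwS')
  have ht : ∀ x ∈ t, x ∉ insert w S := fun x hx =>
    hc.notMem_of_mem_tail hL' hwS' (by simp [hcw, hx])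
  refine ⟨fun r hr => ?_, fun r hr => ?_, fun r hr => ?_, fun x => ?_⟩
  · split_ifs with h
    · simp [h]
    · exact hc.head?_eq r (Set.mem_insert_of_mem w hr)
  · split_ifs
    · have hchain := hc.isChain w hwS'
      rw [hcw] at hchain ⊢
      exact .cons_cons List.mem_cons_self (hchain.imp fun _ _ => List.mem_cons_of_mem _)
    · exact (hc.isChain r (Set.mem_insert_of_mem w hr)).imp fun _ _ => List.mem_cons_of_mem _
  · split_ifs
    · rw [hcw]
      refine (hcw ▸ hc.isInducedPath w hwS').cons ?_ fun x hx => ⟨fun hux => ?_, ?_⟩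
      · rintro (_ | ⟨_, hut⟩)
        · exact hadj.ne rfl
        · exact ht u hut huS'
      · rcases List.mem_cons.1 hx with rfl | hx
        · rfl
        · exact absurd (hN hux) (ht x hx)
      · rintro rfl
        exact hadj
    · exact hc.isInducedPath r (Set.mem_insert_of_mem w hr)
  · exact existsUnique_mem_merge hu hw hcu hc.existsUnique_mem x

end IsForcingChainCover

theorem ValidForcingSeq.exists_isForcingChainCover :
    ∀ {S : Set V} {L : List (V × V)}, ValidForcingSeq G S L →
      S ∪ {w | ∃ u, (u, w) ∈ L} = Set.univ → ∃ c, IsForcingChainCover G S L c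
  | _, [], _, hS => ⟨_, .nil (by simpa using hS)⟩
  | S, (u, w) :: L, hL@⟨_, _, _, _, hL'⟩, hS => by
    classical
    have hS' : insert w S ∪ {x | ∃ v, (v, x) ∈ L} = Set.univ := by
      rw [← hS]
      ext x
      simp [exists_or, or_assoc, or_left_comm]
    obtain ⟨c, hc⟩ := hL'.exists_isForcingChainCover hS'
    exact ⟨_, hc.cons hL⟩

end

theorem forcing_chains_partition_general {V : Type*} (G : SimpleGraph V)
    (R : Set V) (L : List (V × V)) (hvalid : ValidForcingSeq G R L)
    (hcomplete : R ∪ {w : V | ∃ u : V, (u, w) ∈ L} = Set.univ) :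
    (L.map Prod.fst).Nodup ∧
      ∃ chains : R → List V,
        (∀ r : R, (chains r).head? = some (r : V)) ∧
        (∀ r : R, List.Chain' (fun a b => (a, b) ∈ L) (chains r)) ∧
        (∀ r : R, (G.induce {x : V | x ∈ chains r}).IsPathGraph) ∧
        (∀ x : V, ∃! r : R, x ∈ chains r) := by
  obtain ⟨c, hc⟩ := hvalid.exists_isForcingChainCover hcomplete
  exact ⟨hvalid.nodup_map_fst, fun r => c r, fun r => hc.head?_eq r r.2,
    fun r => hc.isChain r r.2, fun r => (hc.isInducedPath r r.2).isPathGraph, hc.existsUnique_mem⟩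

theorem forcing_chains_partition {V : Type*} [Fintype V] (G : SimpleGraph V)
    (R : Set V) (L : List (V × V)) (hvalid : ValidForcingSeq G R L)
    (hcomplete : R ∪ {w : V | ∃ u : V, (u, w) ∈ L} = Set.univ) :
    (L.map Prod.fst).Nodup ∧
      ∃ chains : R → List V,
        (∀ r : R, (chains r).head? = some (r : V)) ∧
        (∀ r : R, List.Chain' (fun a b => (a, b) ∈ L) (chains r)) ∧
        (∀ r : R, (G.induce {x : V | x ∈ chains r}).IsPathGraph) ∧
        (∀ x : V, ∃! r : R, x ∈ chains r) :=
  forcing_chains_partition_general G R L hvalid hcomplete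
end
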